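/- arXiv:2001.03148 — 6 statements merged into one kernel-verified Lean document; each statement's English description precedes it below -/
import Mathlib

section
/- Under (H.ρ), for every ε > 0 the function H_ε is 1-Lipschitz with respect to the Euclidean norm: |H_ε(x) − H_ε(y)| ≤ ‖x − y‖ for all x, y ∈ ℝ^K. -/
/-!
A convex function squeezed between a Lipschitz function `g` (here `x ↦ maxₖ xₖ`) and `g + c` is
Lipschitz with the same constant: for `t ∈ (0, 1]` and `z = x + t⁻¹ (y - x)`, convexity on the
segment `[x, z]` gives `f y - f x ≤ t (f z - f x) ≤ L ‖y - x‖ + t c`, and `t → 0` removes the slack.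
Rescaling `x ↦ ε f (ε⁻¹ x)` does not change Lipschitz constants.
-/

open Set Filter Topology NNReal

section

variable {E : Type*} [SeminormedAddCommGroup E] [NormedSpace ℝ E] {f g : E → ℝ} {L : ℝ≥0} {c : ℝ}

theorem ConvexOn.sub_le_mul_dist_add_of_le_lipschitz (hf : ConvexOn ℝ univ f)
    (hg : LipschitzWith L g) (hgf : ∀ x, g x ≤ f x) (hfg : ∀ x, f x ≤ g x + c)
    (x y : E) {t : ℝ} (ht₀ : 0 < t) (ht₁ : t ≤ 1) :
    f y - f x ≤ L * dist y x + t * c := by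
  set z := x + t⁻¹ • (y - x)
  have hy : y = (1 - t) • x + t • z := by
    simp only [z, smul_add, smul_smul, mul_inv_cancel₀ ht₀.ne']
    module
  have hzx : dist z x = t⁻¹ * dist y x := by
    simp only [z, dist_eq_norm, add_sub_cancel_left, norm_smul, Real.norm_eq_abs,
      abs_of_pos (inv_pos.mpr ht₀)]
  have hconv : f y ≤ (1 - t) * f x + t * f z := by
    simpa only [← hy, smul_eq_mul] using
      hf.2 (mem_univ x) (mem_univ z) (sub_nonneg.2 ht₁) ht₀.le (sub_add_cancel 1 t)
  have hz : f z - f x ≤ t⁻¹ * dist y x * L + c := by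
    have := hg.dist_le_mul z x
    rw [hzx, Real.dist_eq] at this
    linarith [hfg z, hgf x, le_abs_self (g z - g x)]
  calc f y - f x ≤ t * (f z - f x) := by linarith
    _ ≤ t * (t⁻¹ * dist y x * L + c) := by gcongr
    _ = L * dist y x + t * c := by field_simp

theorem ConvexOn.lipschitzWith_of_le_lipschitz_add (hf : ConvexOn ℝ univ f)
    (hg : LipschitzWith L g) (hgf : ∀ x, g x ≤ f x) (hfg : ∀ x, f x ≤ g x + c) :
    LipschitzWith L f := by
  refine LipschitzWith.of_le_add_mul L fun y x => ?_
  have hlim : Tendsto (fun t : ℝ => L * dist y x + t * c) (𝓝[>] 0) (𝓝 (L * dist y x)) :=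
    (Continuous.tendsto' (by fun_prop) 0 _ (by simp)).mono_left nhdsWithin_le_nhds
  have := ge_of_tendsto hlim <| mem_of_superset (Ioc_mem_nhdsGT one_pos) fun t ht =>
    hf.sub_le_mul_dist_add_of_le_lipschitz hg hgf hfg x y ht.1 ht.2
  linarith

theorem LipschitzWith.const_mul_comp_inv_smul (hf : LipschitzWith L f) (ε : ℝ) :
    LipschitzWith L fun x => ε * f (ε⁻¹ • x) := by
  refine LipschitzWith.of_dist_le_mul fun x y => ?_
  calc dist (ε * f (ε⁻¹ • x)) (ε * f (ε⁻¹ • y)) = |ε| * dist (f (ε⁻¹ • x)) (f (ε⁻¹ • y)) := by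
        rw [Real.dist_eq, Real.dist_eq, ← mul_sub, abs_mul]
    _ ≤ |ε| * (L * (|ε⁻¹| * dist x y)) := by
        gcongr
        simpa only [dist_smul₀, Real.norm_eq_abs] using hf.dist_le_mul (ε⁻¹ • x) (ε⁻¹ • y)
    _ = (|ε| * |ε⁻¹|) * (L * dist x y) := by ring
    _ ≤ 1 * (L * dist x y) := by
        gcongr
        rw [← abs_mul]
        rcases eq_or_ne ε 0 with rfl | hε
        · simp
        · simp [mul_inv_cancel₀ hε]
    _ = L * dist x y := one_mul _

end

theorem EuclideanSpace.lipschitzWith_iSup_apply {ι : Type*} [Fintype ι] :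
    LipschitzWith 1 fun x : EuclideanSpace ℝ ι => ⨆ i, x i := by
  refine LipschitzWith.of_le_add_mul 1 fun x y => ?_
  rcases isEmpty_or_nonempty ι with _ | _
  · simp [Real.iSup_of_isEmpty, dist_nonneg]
  refine ciSup_le fun i => ?_
  have hxy : x i - y i ≤ dist x y := by
    simpa only [Real.dist_eq] using (le_abs_self _).trans (PiLp.dist_apply_le x y i)
  have hy : y i ≤ ⨆ i, y i := le_ciSup (Finite.bddAbove_range _) i
  simp only [NNReal.coe_one, one_mul]
  linarith

theorem scaled_smoothing_one_lipschitz_general (K : ℕ)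
    (H : EuclideanSpace ℝ (Fin K) → ℝ) (c₀ : ℝ)
    (hconv : ConvexOn ℝ Set.univ H)
    (hH : ∀ x : EuclideanSpace ℝ (Fin K),
      H x - c₀ ≤ (⨆ k, x k) ∧ (⨆ k, x k) ≤ H x)
    (ε : ℝ) (x y : EuclideanSpace ℝ (Fin K)) :
    |ε * H (ε⁻¹ • x) - ε * H (ε⁻¹ • y)| ≤ ‖x - y‖ := by
  have hlip : LipschitzWith 1 H :=
    hconv.lipschitzWith_of_le_lipschitz_add EuclideanSpace.lipschitzWith_iSup_apply
      (fun x => (hH x).2) (fun x => by linarith [(hH x).1])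
  simpa [Real.dist_eq, dist_eq_norm] using (hlip.const_mul_comp_inv_smul ε).dist_le_mul x y

/-- Under (H.ρ), for every `ε > 0` the function `H_ε(x) = ε H(ε⁻¹ x)` is
`1`-Lipschitz with respect to the Euclidean norm. -/
theorem scaled_smoothing_one_lipschitz (K : ℕ) (hK : 0 < K)
    (H : EuclideanSpace ℝ (Fin K) → ℝ) (c₀ : ℝ) (hc₀ : 0 < c₀)
    (hconv : ConvexOn ℝ Set.univ H) (hsmooth : ContDiff ℝ 2 H)
    (hH : ∀ x : EuclideanSpace ℝ (Fin K),
      H x - c₀ ≤ (⨆ k, x k) ∧ (⨆ k, x k) ≤ H x)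
    (ε : ℝ) (hε : 0 < ε) (x y : EuclideanSpace ℝ (Fin K)) :
    |ε * H (ε⁻¹ • x) - ε * H (ε⁻¹ • y)| ≤ ‖x - y‖ :=
  scaled_smoothing_one_lipschitz_general K H c₀ hconv hH ε x y
end

section
/- Suppose that for each k ∈ {1,…,K} the maps b_k : ℝⁿ → ℝⁿ and σ_k : ℝⁿ → ℝ^{n×n} satisfy σ_k(x) σ_k(x)ᵀ ≥ ν Iₙ (in the sense of symmetric matrices) for all x ∈ ℝⁿ, and Σ_{i,j} |σ_k^{ij}|_{0,1;ℝⁿ} + Σ_i |b_k^i|_{0,1;ℝⁿ} ≤ Λ, where ν, Λ > 0. Then there exist unique functions b̃ : ℝⁿ × Δ_K → ℝⁿ and σ̃ : ℝⁿ × Δ_K → S^n_> (the symmetric positive-definite n×n matrices) such that for all x ∈ ℝⁿ and λ ∈ Δ_K: b̃(x,λ) = Σ_{k=1}^K b_k(x) λ_k and σ̃(x,λ) σ̃(x,λ)ᵀ = Σ_{k=1}^K σ_k(x) σ_k(x)ᵀ λ_k. Moreover there exists a constant Λ' > 0 such that for all x ∈ ℝⁿ and λ ∈ Δ_K: σ̃(x,λ)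 ≥ √ν Iₙ and Σ_{i,j} |σ̃^{ij}(·,λ)|_{0,1;ℝⁿ} + Σ_i |b̃^i(·,λ)|_{0,1;ℝⁿ} ≤ Λ'. -/
/-!
The relaxed drift is forced to be `∑ λₖ bₖ`, and the relaxed diffusion the positive square root
of `a(x, λ) = ∑ λₖ σₖ σₖᵀ`, which is unique. Since `ν Iₙ ≤ σₖ σₖᵀ` for every `k` and `λ` is a
convex weight, `ν Iₙ ≤ a`, hence `√ν Iₙ ≤ √a`. Sup bounds and Lipschitz constants pass through
products, sums and convex combinations, which handles `b̃` and the entries of `a`. The square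
root is Lipschitz on `{a ≥ ν Iₙ}`: if `S, T ≥ r Iₙ` and `v` is a unit eigenvector of `S - T`
with eigenvalue `μ`, then `vᵀ(S² - T²)v = μ vᵀ(S + T)v`, so `|μ| ≤ |vᵀ(S² - T²)v| / 2r`, and an
entry of a symmetric matrix is at most its largest absolute eigenvalue.
-/

open Matrix
open scoped MatrixOrder

namespace Matrix

variable {m : Type*}

lemma single_add_smul_single_dotProduct_mulVec [Fintype m] [DecidableEq m] (M : Matrix m m ℝ)
    (i j : m) (s : ℝ) :
    (Pi.single i 1 + s • Pi.single j 1) ⬝ᵥ M *ᵥ (Pi.single i 1 + s • Pi.single j 1) =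
      M i i + s * (M i j + M j i) + s ^ 2 * M j j := by
  simp only [mulVec_add, mulVec_smul, add_dotProduct, dotProduct_add, smul_dotProduct,
    dotProduct_smul, mulVec_single_one, single_one_dotProduct, smul_eq_mul, col_apply]
  ring

lemma abs_apply_le_of_mem_Icc [Fintype m] [DecidableEq m] {E : Matrix m m ℝ} {c : ℝ}
    (h : E ∈ Set.Icc (-(c • 1)) (c • 1)) (i j : m) : |E i j| ≤ c := by
  have hE : E j i = E i j := by
    have := (isHermitian_one.smul (IsSelfAdjoint.all c)).sub (le_iff.1 h.2).1
    rw [sub_sub_cancel, isHermitian_iff_isSymm] at this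
    exact this.apply i j
  -- test `c - E` on `eᵢ + s eⱼ` and `E + c` on `eᵢ - s eⱼ`; the diagonal entries cancel
  have key (s : ℝ) (hs : s ^ 2 = 1) : s * E i j ≤ c := by
    have h₁ := (le_iff.1 h.2).dotProduct_mulVec_nonneg (Pi.single i 1 + s • Pi.single j 1)
    have h₂ := (le_iff.1 h.1).dotProduct_mulVec_nonneg (Pi.single i 1 + (-s) • Pi.single j 1)
    simp only [star_trivial, single_add_smul_single_dotProduct_mulVec, sub_apply, neg_apply,
      smul_apply, one_apply, smul_eq_mul, hE, @eq_comm _ j i, if_true, neg_sq, hs] at h₁ h₂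
    linarith
  exact abs_le.2 ⟨by linarith [key (-1) (by norm_num)], by simpa using key 1 (by norm_num)⟩

lemma IsHermitian.mem_Icc_of_abs_eigenvalues_le [Fintype m] [DecidableEq m] {E : Matrix m m ℝ}
    (hE : E.IsHermitian) {c : ℝ} (h : ∀ t, |hE.eigenvalues t| ≤ c) :
    E ∈ Set.Icc (-(c • 1)) (c • 1) := by
  rw [← neg_smul, Algebra.smul_def, Algebra.smul_def, mul_one, mul_one, Set.mem_Icc,
    algebraMap_le_iff_le_spectrum hE.isSelfAdjoint,
    le_algebraMap_iff_spectrum_le hE.isSelfAdjoint, hE.spectrum_real_eq_range_eigenvalues]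
  constructor
  all_goals rintro _ ⟨t, rfl⟩
  · exact neg_le_of_abs_le (h t)
  · exact le_of_abs_le (h t)

lemma dotProduct_mul_self_sub_mul_self_mulVec [Fintype m] {S T : Matrix m m ℝ}
    (hST : (S - T).IsSymm) {v : m → ℝ} {μ : ℝ} (hv : (S - T) *ᵥ v = μ • v) :
    v ⬝ᵥ (S * S - T * T) *ᵥ v = μ * (v ⬝ᵥ S *ᵥ v + v ⬝ᵥ T *ᵥ v) := by
  have hvl : v ᵥ* (S - T) = μ • v := by rw [← hST.eq, vecMul_transpose, hv]
  have hsplit : S * S - T * T = S * (S - T) + (S - T) * T := by noncomm_ring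
  rw [hsplit, add_mulVec, dotProduct_add, ← mulVec_mulVec, ← mulVec_mulVec, hv, mulVec_smul,
    dotProduct_mulVec v (S - T), hvl, dotProduct_smul, smul_dotProduct, smul_eq_mul, smul_eq_mul,
    mul_add]

lemma abs_dotProduct_mulVec_le [Fintype m] {D : Matrix m m ℝ} {d : ℝ} (hD : ∀ p q, |D p q| ≤ d)
    {v : m → ℝ} (hv : ∀ p, |v p| ≤ 1) : |v ⬝ᵥ D *ᵥ v| ≤ Fintype.card m ^ 2 * d := by
  have hterm (p q : m) : |v p * (D p q * v q)| ≤ d := by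
    have hd : 0 ≤ d := (abs_nonneg _).trans (hD p q)
    rw [abs_mul, abs_mul]
    calc |v p| * (|D p q| * |v q|) ≤ 1 * (d * 1) := by gcongr; exacts [hv p, hD p q, hv q]
      _ = d := by ring
  calc |v ⬝ᵥ D *ᵥ v| = |∑ p, ∑ q, v p * (D p q * v q)| := by
        simp only [dotProduct, mulVec, Finset.mul_sum]
    _ ≤ ∑ p, ∑ q, |v p * (D p q * v q)| :=
        (Finset.abs_sum_le_sum_abs _ _).trans
          (Finset.sum_le_sum fun p _ => Finset.abs_sum_le_sum_abs _ _)
    _ ≤ ∑ _p : m, ∑ _q : m, d :=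
        Finset.sum_le_sum fun p _ => Finset.sum_le_sum fun q _ => hterm p q
    _ = Fintype.card m ^ 2 * d := by simp [sq, mul_assoc]

lemma le_dotProduct_mulVec_of_smul_one_le [Fintype m] [DecidableEq m] {S : Matrix m m ℝ} {r : ℝ}
    (h : r • 1 ≤ S) {v : m → ℝ} (hv : v ⬝ᵥ v = 1) : r ≤ v ⬝ᵥ S *ᵥ v := by
  have := (le_iff.1 h).dotProduct_mulVec_nonneg v
  simpa [sub_mulVec, smul_mulVec, dotProduct_sub, hv] using this

lemma abs_sub_apply_le_of_mul_self_sub [Fintype m] [DecidableEq m] {S T : Matrix m m ℝ} {r d : ℝ}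
    (hr : 0 < r) (hS : r • 1 ≤ S) (hT : r • 1 ≤ T) (hD : ∀ p q, |(S * S - T * T) p q| ≤ d)
    (i j : m) : |S i j - T i j| ≤ Fintype.card m ^ 2 * d / (2 * r) := by
  have hr1 : 0 ≤ r • (1 : Matrix m m ℝ) := smul_nonneg hr.le zero_le_one
  have hE : (S - T).IsHermitian :=
    (nonneg_iff_posSemidef.1 (hr1.trans hS)).1.sub (nonneg_iff_posSemidef.1 (hr1.trans hT)).1
  have heig (t : m) : |hE.eigenvalues t| ≤ Fintype.card m ^ 2 * d / (2 * r) := by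
    have hid := dotProduct_mul_self_sub_mul_self_mulVec (isHermitian_iff_isSymm.1 hE)
      (hE.mulVec_eigenvectorBasis t)
    set v := hE.eigenvectorBasis t
    have hv : ‖v‖ = 1 := hE.eigenvectorBasis.orthonormal.1 t
    have hvv : v.ofLp ⬝ᵥ v.ofLp = 1 := by
      have := real_inner_self_eq_norm_sq v
      rwa [EuclideanSpace.inner_eq_star_dotProduct, hv, star_trivial, one_pow] at this
    have hvp (p : m) : |v.ofLp p| ≤ 1 := hv ▸ PiLp.norm_apply_le v p
    have hSv := le_dotProduct_mulVec_of_smul_one_le hS hvv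
    have hTv := le_dotProduct_mulVec_of_smul_one_le hT hvv
    rw [le_div_iff₀ (by positivity)]
    calc |hE.eigenvalues t| * (2 * r)
        ≤ |hE.eigenvalues t| * (v.ofLp ⬝ᵥ S *ᵥ v.ofLp + v.ofLp ⬝ᵥ T *ᵥ v.ofLp) := by
          gcongr; linarith
      _ = |v.ofLp ⬝ᵥ (S * S - T * T) *ᵥ v.ofLp| := by
          rw [hid, abs_mul, abs_of_nonneg (by linarith : 0 ≤ v.ofLp ⬝ᵥ S *ᵥ v.ofLp + _)]
      _ ≤ Fintype.card m ^ 2 * d := abs_dotProduct_mulVec_le hD hvp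
  simpa using abs_apply_le_of_mem_Icc (hE.mem_Icc_of_abs_eigenvalues_le heig) i j

lemma abs_apply_le_sqrt_mul_self_apply [Fintype m] {S : Matrix m m ℝ} (hS : S.IsSymm) (i j : m) :
    |S i j| ≤ √((S * S) i i) := by
  have hdiag : (S * S) i i = ∑ r, S i r ^ 2 := by
    simp only [mul_apply, sq, hS.apply i]
  rw [← Real.sqrt_sq_eq_abs, hdiag]
  exact Real.sqrt_le_sqrt
    (Finset.single_le_sum (fun r _ => sq_nonneg (S i r)) (Finset.mem_univ j))

lemma isSymm_of_nonneg {S : Matrix m m ℝ} (hS : 0 ≤ S) : S.IsSymm :=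
  isHermitian_iff_isSymm.1 (nonneg_iff_posSemidef.1 hS).1

lemma sqrt_mul_transpose_sqrt [Fintype m] [DecidableEq m] {A : Matrix m m ℝ} (hA : 0 ≤ A) :
    CFC.sqrt A * (CFC.sqrt A)ᵀ = A := by
  rw [(isSymm_of_nonneg (CFC.sqrt_nonneg A)).eq, CFC.sqrt_mul_sqrt_self A]

lemma eq_sqrt_of_mul_transpose_eq [Fintype m] [DecidableEq m] {σ A : Matrix m m ℝ} (hσ : 0 ≤ σ)
    (h : σ * σᵀ = A) : σ = CFC.sqrt A := by
  have hA : 0 ≤ A :=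
    h ▸ nonneg_iff_posSemidef.2 (by simpa using posSemidef_self_mul_conjTranspose σ)
  rw [(isSymm_of_nonneg hσ).eq] at h
  exact ((CFC.sqrt_eq_iff A σ).2 h).symm

lemma sqrt_smul_one_le_sqrt [Fintype m] [DecidableEq m] {A : Matrix m m ℝ} {ν : ℝ} (h : ν • 1 ≤ A)
    (hA : 0 ≤ A) : √ν • 1 ≤ CFC.sqrt A := by
  rw [CFC.sqrt_eq_real_sqrt A hA, cfcₙ_eq_cfc, Algebra.smul_def, mul_one,
    algebraMap_le_cfc_iff _ _ _ (by fun_prop) hA.isSelfAdjoint]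
  rw [Algebra.smul_def, mul_one, algebraMap_le_iff_le_spectrum hA.isSelfAdjoint] at h
  exact fun x hx => Real.sqrt_le_sqrt (h x hx)

lemma posDef_of_smul_one_le [DecidableEq m] {M : Matrix m m ℝ} {c : ℝ} (hc : 0 < c)
    (h : c • 1 ≤ M) : M.PosDef := by
  simpa using (PosDef.one.smul hc).add_posSemidef (le_iff.1 h)

end Matrix

def BoundedLipschitzWith {E : Type*} [SeminormedAddCommGroup E] (S L : ℝ) (f : E → ℝ) : Prop :=
  0 ≤ S ∧ 0 ≤ L ∧ (∀ x, |f x| ≤ S) ∧ ∀ x y, |f x - f y| ≤ L * ‖x - y‖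

namespace BoundedLipschitzWith

variable {E : Type*} [SeminormedAddCommGroup E] {S L S₁ L₁ S₂ L₂ : ℝ} {f g : E → ℝ}

lemma mono (hf : BoundedLipschitzWith S₁ L₁ f) (hS : S₁ ≤ S₂) (hL : L₁ ≤ L₂) :
    BoundedLipschitzWith S₂ L₂ f :=
  ⟨hf.1.trans hS, hf.2.1.trans hL, fun x => (hf.2.2.1 x).trans hS,
    fun x y => (hf.2.2.2 x y).trans (by gcongr)⟩

lemma mul (hf : BoundedLipschitzWith S₁ L₁ f) (hg : BoundedLipschitzWith S₂ L₂ g) :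
    BoundedLipschitzWith (S₁ * S₂) (S₁ * L₂ + L₁ * S₂) (fun x => f x * g x) := by
  obtain ⟨hS₁, hL₁, hf_le, hf_lip⟩ := hf
  obtain ⟨hS₂, hL₂, hg_le, hg_lip⟩ := hg
  refine ⟨by positivity, by positivity, fun x => ?_, fun x y => ?_⟩
  · rw [abs_mul]
    exact mul_le_mul (hf_le x) (hg_le x) (abs_nonneg _) hS₁
  · calc |f x * g x - f y * g y| = |f x * (g x - g y) + (f x - f y) * g y| := by ring_nf
      _ ≤ |f x| * |g x - g y| + |f x - f y| * |g y| := by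
          rw [← abs_mul, ← abs_mul]; exact abs_add_le _ _
      _ ≤ S₁ * (L₂ * ‖x - y‖) + L₁ * ‖x - y‖ * S₂ := by
          gcongr
          exacts [hf_le x, hg_lip x y, hf_lip x y, hg_le y]
      _ = (S₁ * L₂ + L₁ * S₂) * ‖x - y‖ := by ring

lemma const_mul (hf : BoundedLipschitzWith S L f) {c : ℝ} (hc : 0 ≤ c) :
    BoundedLipschitzWith (c * S) (c * L) (fun x => c * f x) := by
  obtain ⟨hS, hL, hf_le, hf_lip⟩ := hf
  refine ⟨by positivity, by positivity, fun x => ?_, fun x y => ?_⟩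
  · rw [abs_mul, abs_of_nonneg hc]
    gcongr
    exact hf_le x
  · rw [← mul_sub, abs_mul, abs_of_nonneg hc, mul_assoc]
    gcongr
    exact hf_lip x y

lemma sum {ι : Type*} {s : Finset ι} {S L : ι → ℝ} {f : ι → E → ℝ}
    (hf : ∀ i ∈ s, BoundedLipschitzWith (S i) (L i) (f i)) :
    BoundedLipschitzWith (∑ i ∈ s, S i) (∑ i ∈ s, L i) (fun x => ∑ i ∈ s, f i x) := by
  refine ⟨Finset.sum_nonneg fun i hi => (hf i hi).1, Finset.sum_nonneg fun i hi => (hf i hi).2.1,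
    fun x => ?_, fun x y => ?_⟩
  · exact (Finset.abs_sum_le_sum_abs _ _).trans
      (Finset.sum_le_sum fun i hi => (hf i hi).2.2.1 x)
  · rw [← Finset.sum_sub_distrib, Finset.sum_mul]
    exact (Finset.abs_sum_le_sum_abs _ _).trans
      (Finset.sum_le_sum fun i hi => (hf i hi).2.2.2 x y)

lemma sum_mul_of_mem_stdSimplex {ι : Type*} [Fintype ι] {w : ι → ℝ} (hw : w ∈ stdSimplex ℝ ι)
    {f : ι → E → ℝ} (hf : ∀ i, BoundedLipschitzWith S L (f i)) :
    BoundedLipschitzWith S L (fun x => ∑ i, w i * f i x) := by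
  have := sum fun i (_ : i ∈ Finset.univ) => (hf i).const_mul (hw.1 i)
  simpa only [← Finset.sum_mul, hw.2, one_mul] using this

lemma matrix_sum_smul_apply {ι : Type*} [Fintype ι] {w : ι → ℝ} (hw : w ∈ stdSimplex ℝ ι)
    {m n : Type*} {A : ι → E → Matrix m n ℝ} (hA : ∀ k i j, BoundedLipschitzWith S L (A k · i j))
    (i : m) (j : n) : BoundedLipschitzWith S L (fun x => (∑ k, w k • A k x) i j) := by
  simpa only [Matrix.sum_apply, Matrix.smul_apply, smul_eq_mul] using
    sum_mul_of_mem_stdSimplex hw fun k => hA k i j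

lemma sum_smul_apply {ι : Type*} [Fintype ι] {w : ι → ℝ} (hw : w ∈ stdSimplex ℝ ι)
    {m : Type*} {v : ι → E → EuclideanSpace ℝ m} (hv : ∀ k i, BoundedLipschitzWith S L (v k · i))
    (i : m) : BoundedLipschitzWith S L (fun x => (∑ k, w k • v k x) i) := by
  simpa using sum_mul_of_mem_stdSimplex hw fun k => hv k i

lemma matrix_mul_apply {m : Type*} [Fintype m] {A B : E → Matrix m m ℝ}
    (hA : ∀ i j, BoundedLipschitzWith S₁ L₁ (A · i j))
    (hB : ∀ i j, BoundedLipschitzWith S₂ L₂ (B · i j)) (i j : m) :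
    BoundedLipschitzWith (Fintype.card m * (S₁ * S₂)) (Fintype.card m * (S₁ * L₂ + L₁ * S₂))
      (fun x => (A x * B x) i j) := by
  have := sum fun r (_ : r ∈ Finset.univ) => (hA i r).mul (hB r j)
  simpa only [Finset.sum_const, Finset.card_univ, nsmul_eq_mul, Matrix.mul_apply] using this

end BoundedLipschitzWith

lemma BoundedLipschitzWith.sqrt_apply {E : Type*} [SeminormedAddCommGroup E] {m : Type*}
    [Fintype m] [DecidableEq m] {A : E → Matrix m m ℝ} {S L ν : ℝ} (hν : 0 < ν)
    (hA : ∀ x, ν • 1 ≤ A x) (hent : ∀ i j, BoundedLipschitzWith S L (A · i j)) (i j : m) :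
    BoundedLipschitzWith √S (Fintype.card m ^ 2 * L / (2 * √ν))
      (fun x => CFC.sqrt (A x) i j) := by
  have hA₀ (x : E) : 0 ≤ A x := (smul_nonneg hν.le zero_le_one).trans (hA x)
  have hlow (x : E) : √ν • 1 ≤ CFC.sqrt (A x) := sqrt_smul_one_le_sqrt (hA x) (hA₀ x)
  refine ⟨Real.sqrt_nonneg _, by have := (hent i j).2.1; positivity, fun x => ?_, fun x y => ?_⟩
  · calc |CFC.sqrt (A x) i j| ≤ √((CFC.sqrt (A x) * CFC.sqrt (A x)) i i) :=
          abs_apply_le_sqrt_mul_self_apply (isSymm_of_nonneg (CFC.sqrt_nonneg _)) i j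
      _ ≤ √S := by
          rw [CFC.sqrt_mul_sqrt_self _ (hA₀ x)]
          exact Real.sqrt_le_sqrt (le_of_abs_le ((hent i i).2.2.1 x))
  · have hD (p q : m) : |(CFC.sqrt (A x) * CFC.sqrt (A x) - CFC.sqrt (A y) * CFC.sqrt (A y)) p q|
        ≤ L * ‖x - y‖ := by
      rw [CFC.sqrt_mul_sqrt_self _ (hA₀ x), CFC.sqrt_mul_sqrt_self _ (hA₀ y)]
      exact (hent p q).2.2.2 x y
    exact (abs_sub_apply_le_of_mul_self_sub (Real.sqrt_pos.2 hν) (hlow x) (hlow y) hD i j).trans_eq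
      (by ring)

/-- `C01NormLE σ b Λ` is the bound `∑ᵢⱼ |σⁱʲ|₀,₁ + ∑ᵢ |bⁱ|₀,₁ ≤ Λ`, with each `C^{0,1}` norm
witnessed by a sup bound and a Lipschitz constant. -/
def C01NormLE {E : Type*} [SeminormedAddCommGroup E] {m : Type*} [Fintype m]
    (σ : E → Matrix m m ℝ) (b : E → EuclideanSpace ℝ m) (Λ : ℝ) : Prop :=
  ∃ (SA LA : m → m → ℝ) (SB LB : m → ℝ),
    (∀ i j, BoundedLipschitzWith (SA i j) (LA i j) (σ · i j)) ∧
    (∀ i, BoundedLipschitzWith (SB i) (LB i) (b · i)) ∧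
    ((∑ i, ∑ j, (SA i j + LA i j)) + ∑ i, (SB i + LB i)) ≤ Λ

namespace C01NormLE

variable {E : Type*} [SeminormedAddCommGroup E] {m : Type*} [Fintype m]
  {σ : E → Matrix m m ℝ} {b : E → EuclideanSpace ℝ m} {Λ : ℝ}

lemma entries (h : C01NormLE σ b Λ) :
    (∀ i j, BoundedLipschitzWith Λ Λ (σ · i j)) ∧ ∀ i, BoundedLipschitzWith Λ Λ (b · i) := by
  obtain ⟨SA, LA, SB, LB, hσ, hb, hsum⟩ := h
  have hσ₀ (i j : m) : 0 ≤ SA i j + LA i j := add_nonneg (hσ i j).1 (hσ i j).2.1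
  have hb₀ (i : m) : 0 ≤ SB i + LB i := add_nonneg (hb i).1 (hb i).2.1
  have hσΛ : ∑ i, ∑ j, (SA i j + LA i j) ≤ Λ := by
    linarith [Finset.sum_nonneg fun i (_ : i ∈ Finset.univ) => hb₀ i]
  have hbΛ : ∑ i, (SB i + LB i) ≤ Λ := by
    linarith [Finset.sum_nonneg fun i (_ : i ∈ Finset.univ) =>
      Finset.sum_nonneg fun j (_ : j ∈ Finset.univ) => hσ₀ i j]
  refine ⟨fun i j => ?_, fun i => ?_⟩
  · have hle : SA i j + LA i j ≤ Λ :=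
      ((Finset.single_le_sum (fun j _ => hσ₀ i j) (Finset.mem_univ j)).trans
        (Finset.single_le_sum (fun i _ => Finset.sum_nonneg fun j _ => hσ₀ i j)
          (Finset.mem_univ i))).trans hσΛ
    exact (hσ i j).mono (by linarith [(hσ i j).2.1]) (by linarith [(hσ i j).1])
  · have hle : SB i + LB i ≤ Λ :=
      (Finset.single_le_sum (fun i _ => hb₀ i) (Finset.mem_univ i)).trans hbΛ
    exact (hb i).mono (by linarith [(hb i).2.1]) (by linarith [(hb i).1])

lemma of_entries {S L S' L' : ℝ} (hσ : ∀ i j, BoundedLipschitzWith S L (σ · i j))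
    (hb : ∀ i, BoundedLipschitzWith S' L' (b · i)) :
    C01NormLE σ b (Fintype.card m ^ 2 * (S + L) + Fintype.card m * (S' + L')) :=
  ⟨fun _ _ => S, fun _ _ => L, fun _ => S', fun _ => L', hσ, hb, le_of_eq (by simp; ring)⟩

lemma mono (h : C01NormLE σ b Λ) {Λ' : ℝ} (hΛ : Λ ≤ Λ') : C01NormLE σ b Λ' :=
  let ⟨SA, LA, SB, LB, hσ, hb, hsum⟩ := h
  ⟨SA, LA, SB, LB, hσ, hb, hsum.trans hΛ⟩

end C01NormLE

def SimplexT (K : ℕ) : Type :=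
  {l : Fin K → ℝ // (∑ k, l k) = 1 ∧ ∀ k, 0 ≤ l k}

theorem relaxed_coefficients_exist_unique_general (n K : ℕ)
    (ν Λ : ℝ) (hν : 0 < ν)
    (b : Fin K → EuclideanSpace ℝ (Fin n) → EuclideanSpace ℝ (Fin n))
    (σ : Fin K → EuclideanSpace ℝ (Fin n) → Matrix (Fin n) (Fin n) ℝ)
    (hell : ∀ k x, ((σ k x) * (σ k x)ᵀ - ν • (1 : Matrix (Fin n) (Fin n) ℝ)).PosSemidef)
    (hbound : ∀ k, ∃ (SA LA : Fin n → Fin n → ℝ) (SB LB : Fin n → ℝ),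
      (∀ i j, 0 ≤ SA i j ∧ 0 ≤ LA i j ∧
        (∀ x, |σ k x i j| ≤ SA i j) ∧
        (∀ x y, |σ k x i j - σ k y i j| ≤ LA i j * ‖x - y‖)) ∧
      (∀ i, 0 ≤ SB i ∧ 0 ≤ LB i ∧
        (∀ x, |b k x i| ≤ SB i) ∧
        (∀ x y, |b k x i - b k y i| ≤ LB i * ‖x - y‖)) ∧
      ((∑ i, ∑ j, (SA i j + LA i j)) + ∑ i, (SB i + LB i)) ≤ Λ) :
    ∃ (bt : EuclideanSpace ℝ (Fin n) → SimplexT K → EuclideanSpace ℝ (Fin n))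
      (σt : EuclideanSpace ℝ (Fin n) → SimplexT K → Matrix (Fin n) (Fin n) ℝ),
      (∀ x l, bt x l = ∑ k, (l.1 k) • b k x) ∧
      (∀ x l, (σt x l).PosDef ∧
        (σt x l) * (σt x l)ᵀ = ∑ k, (l.1 k) • ((σ k x) * (σ k x)ᵀ)) ∧
      (∀ (bt' : EuclideanSpace ℝ (Fin n) → SimplexT K → EuclideanSpace ℝ (Fin n))
         (σt' : EuclideanSpace ℝ (Fin n) → SimplexT K → Matrix (Fin n) (Fin n) ℝ),
        (∀ x l, bt' x l = ∑ k, (l.1 k) • b k x) →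
        (∀ x l, (σt' x l).PosDef ∧
          (σt' x l) * (σt' x l)ᵀ = ∑ k, (l.1 k) • ((σ k x) * (σ k x)ᵀ)) →
        bt' = bt ∧ σt' = σt) ∧
      (∃ Λ' > (0:ℝ), ∀ l : SimplexT K,
        (∀ x, ((σt x l) - Real.sqrt ν • (1 : Matrix (Fin n) (Fin n) ℝ)).PosSemidef) ∧
        ∃ (SA LA : Fin n → Fin n → ℝ) (SB LB : Fin n → ℝ),
          (∀ i j, 0 ≤ SA i j ∧ 0 ≤ LA i j ∧
            (∀ x, |σt x l i j| ≤ SA i j) ∧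
            (∀ x y, |σt x l i j - σt y l i j| ≤ LA i j * ‖x - y‖)) ∧
          (∀ i, 0 ≤ SB i ∧ 0 ≤ LB i ∧
            (∀ x, |bt x l i| ≤ SB i) ∧
            (∀ x y, |bt x l i - bt y l i| ≤ LB i * ‖x - y‖)) ∧
          ((∑ i, ∑ j, (SA i j + LA i j)) + ∑ i, (SB i + LB i)) ≤ Λ') := by
  have hl (l : SimplexT K) : l.1 ∈ stdSimplex ℝ (Fin K) := ⟨l.2.2, l.2.1⟩
  have hν_le (x : EuclideanSpace ℝ (Fin n)) (l : SimplexT K) :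
      ν • 1 ≤ ∑ k, l.1 k • (σ k x * (σ k x)ᵀ) :=
    (convex_Ici (ν • 1 : Matrix (Fin n) (Fin n) ℝ)).sum_mem (fun k _ => (hl l).1 k) (hl l).2
      fun k _ => le_iff.2 (hell k x)
  have h₀_le (x : EuclideanSpace ℝ (Fin n)) (l : SimplexT K) :
      0 ≤ ∑ k, l.1 k • (σ k x * (σ k x)ᵀ) :=
    (smul_nonneg hν.le zero_le_one).trans (hν_le x l)
  have hsqrt_le (x : EuclideanSpace ℝ (Fin n)) (l : SimplexT K) :
      √ν • 1 ≤ CFC.sqrt (∑ k, l.1 k • (σ k x * (σ k x)ᵀ)) :=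
    sqrt_smul_one_le_sqrt (hν_le x l) (h₀_le x l)
  have hσΛ (k : Fin K) := C01NormLE.entries (hbound k)
  have hσσ (k : Fin K) := BoundedLipschitzWith.matrix_mul_apply (B := fun x => (σ k x)ᵀ)
    (hσΛ k).1 fun i j => (hσΛ k).1 j i
  have hC01 (l : SimplexT K) := C01NormLE.of_entries
    (BoundedLipschitzWith.sqrt_apply hν (fun x => hν_le x l)
      (BoundedLipschitzWith.matrix_sum_smul_apply (hl l) hσσ))
    (BoundedLipschitzWith.sum_smul_apply (hl l) fun k => (hσΛ k).2)
  refine ⟨fun x l => ∑ k, l.1 k • b k x, fun x l => CFC.sqrt (∑ k, l.1 k • (σ k x * (σ k x)ᵀ)),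
    fun _ _ => rfl,
    fun x l => ⟨posDef_of_smul_one_le (Real.sqrt_pos.2 hν) (hsqrt_le x l),
      sqrt_mul_transpose_sqrt (h₀_le x l)⟩,
    fun bt' σt' hb' hσ' => ⟨funext₂ hb', funext₂ fun x l => eq_sqrt_of_mul_transpose_eq
      (nonneg_iff_posSemidef.2 (hσ' x l).1.posSemidef) (hσ' x l).2⟩,
    max 1 _, lt_max_of_lt_left one_pos,
    fun l => ⟨fun x => hsqrt_le x l, (hC01 l).mono (le_max_right _ _)⟩⟩

/-- If each `b_k` and `σ_k` satisfy uniform ellipticity `σ_k σ_kᵀ ≥ ν Iₙ`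
and the `C^{0,1}`-norm bound `Σ_{i,j}|σ_k^{ij}|_{0,1} + Σ_i|b_k^i|_{0,1} ≤ Λ`, then there
exist unique `b̃ : ℝⁿ × Δ_K → ℝⁿ` and `σ̃ : ℝⁿ × Δ_K → 𝕊^n_>` with
`b̃(x,λ) = Σ_k b_k(x) λ_k` and `σ̃ σ̃ᵀ = Σ_k σ_k σ_kᵀ λ_k`; moreover there is `Λ' > 0`
with `σ̃(x,λ) ≥ √ν Iₙ` and `Σ_{i,j}|σ̃^{ij}(·,λ)|_{0,1} + Σ_i|b̃^i(·,λ)|_{0,1} ≤ Λ'`. -/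
theorem relaxed_coefficients_exist_unique (n K : ℕ) (hn : 0 < n) (hK : 0 < K)
    (ν Λ : ℝ) (hν : 0 < ν) (hΛ : 0 < Λ)
    (b : Fin K → EuclideanSpace ℝ (Fin n) → EuclideanSpace ℝ (Fin n))
    (σ : Fin K → EuclideanSpace ℝ (Fin n) → Matrix (Fin n) (Fin n) ℝ)
    (hell : ∀ k x, ((σ k x) * (σ k x)ᵀ - ν • (1 : Matrix (Fin n) (Fin n) ℝ)).PosSemidef)
    (hbound : ∀ k, ∃ (SA LA : Fin n → Fin n → ℝ) (SB LB : Fin n → ℝ),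
      (∀ i j, 0 ≤ SA i j ∧ 0 ≤ LA i j ∧
        (∀ x, |σ k x i j| ≤ SA i j) ∧
        (∀ x y, |σ k x i j - σ k y i j| ≤ LA i j * ‖x - y‖)) ∧
      (∀ i, 0 ≤ SB i ∧ 0 ≤ LB i ∧
        (∀ x, |b k x i| ≤ SB i) ∧
        (∀ x y, |b k x i - b k y i| ≤ LB i * ‖x - y‖)) ∧
      ((∑ i, ∑ j, (SA i j + LA i j)) + ∑ i, (SB i + LB i)) ≤ Λ) :
    ∃ (bt : EuclideanSpace ℝ (Fin n) → SimplexT K → EuclideanSpace ℝ (Fin n))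
      (σt : EuclideanSpace ℝ (Fin n) → SimplexT K → Matrix (Fin n) (Fin n) ℝ),
      (∀ x l, bt x l = ∑ k, (l.1 k) • b k x) ∧
      (∀ x l, (σt x l).PosDef ∧
        (σt x l) * (σt x l)ᵀ = ∑ k, (l.1 k) • ((σ k x) * (σ k x)ᵀ)) ∧
      (∀ (bt' : EuclideanSpace ℝ (Fin n) → SimplexT K → EuclideanSpace ℝ (Fin n))
         (σt' : EuclideanSpace ℝ (Fin n) → SimplexT K → Matrix (Fin n) (Fin n) ℝ),
        (∀ x l, bt' x l = ∑ k, (l.1 k) • b k x) →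
        (∀ x l, (σt' x l).PosDef ∧
          (σt' x l) * (σt' x l)ᵀ = ∑ k, (l.1 k) • ((σ k x) * (σ k x)ᵀ)) →
        bt' = bt ∧ σt' = σt) ∧
      (∃ Λ' > (0:ℝ), ∀ l : SimplexT K,
        (∀ x, ((σt x l) - Real.sqrt ν • (1 : Matrix (Fin n) (Fin n) ℝ)).PosSemidef) ∧
        ∃ (SA LA : Fin n → Fin n → ℝ) (SB LB : Fin n → ℝ),
          (∀ i j, 0 ≤ SA i j ∧ 0 ≤ LA i j ∧
            (∀ x, |σt x l i j| ≤ SA i j) ∧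
            (∀ x y, |σt x l i j - σt y l i j| ≤ LA i j * ‖x - y‖)) ∧
          (∀ i, 0 ≤ SB i ∧ 0 ≤ LB i ∧
            (∀ x, |bt x l i| ≤ SB i) ∧
            (∀ x y, |bt x l i - bt y l i| ≤ LB i * ‖x - y‖)) ∧
          ((∑ i, ∑ j, (SA i j + LA i j)) + ∑ i, (SB i + LB i)) ≤ Λ') :=
  relaxed_coefficients_exist_unique_general n K ν Λ hν b σ hell hbound
end

section
/- Let n₂, n₃ ∈ ℕ, and let φ₁ : ℝ² → ℝ, φ₂ : ℝ^{n₂} → ℝ, φ₃ : ℝ^{n₃} → ℝ and constants ϑ₁, ϑ₂, ϑ₃, c₁, c₂, c₃ ≥ 0 be such that each φ_i satisfies (S_loc) with constant ϑ_i and φ_i(x) ≤ max-coordinate of x + c_i for all x in its domain. Define φ : ℝ^{n₂+n₃} → ℝ by φ(x) = φ₁(φ₂(x⁽¹⁾), φ₃(x⁽²⁾)), where x⁽¹⁾ = (x₁,…,x_{n₂}) and x⁽²⁾ = (x_{n₂+1},…,x_{n₂+n₃}). Then φ satisfies (S_loc) with constant max(ϑ₂, ϑ₃, c₂+ϑ₁,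 c₃+ϑ₁), and φ(x) ≤ max_{1≤k≤n₂+n₃} x_k + c₁ + max(c₂, c₃) for all x ∈ ℝ^{n₂+n₃}. -/
open scoped BigOperators

/-- `(S_loc)`: `φ : ℝᵐ → ℝ` satisfies `(S_loc)` with constant `ϑ ≥ 0` if whenever
`x_k ≥ x_j + ϑ` for all `j ≠ k`, one has `φ(x) = x_k`. -/
def SLoc {m : ℕ} (φ : (Fin m → ℝ) → ℝ) (ϑ : ℝ) : Prop :=
  ∀ (k : Fin m) (x : Fin m → ℝ), (∀ j, j ≠ k → x j + ϑ ≤ x k) → φ x = x k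

/-!
If `x_k` leads every other coordinate by `ϑ`, it leads its own block by at least `ϑ₂` (or `ϑ₃`),
so the inner function of that block returns `x_k`. The other block lies below `x_k - ϑ`, so its
inner function is at most `x_k - ϑ + c₃ ≤ x_k - ϑ₁`; the outer function thus sees `x_k` ahead by
`ϑ₁` and returns it. The upper bound is the inner and outer bounds stacked.
-/

theorem Fin.castAdd_ne_natAdd {m n : ℕ} (i : Fin m) (j : Fin n) :
    Fin.castAdd n i ≠ Fin.natAdd m j :=
  Fin.ne_of_val_ne (by simp only [Fin.val_castAdd, Fin.val_natAdd]; omega)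

section MaxBound

variable {ι : Type*} [Nonempty ι] {φ : (ι → ℝ) → ℝ} {x : ι → ℝ} {c t : ℝ}

theorem apply_le_add_of_forall_le (hb : φ x ≤ (⨆ k, x k) + c) (hx : ∀ j, x j ≤ t) :
    φ x ≤ t + c :=
  hb.trans (add_le_add_left (ciSup_le hx) c)

theorem apply_add_le_of_forall_add_le {a : ℝ} (hb : φ x ≤ (⨆ k, x k) + c)
    (hx : ∀ j, x j + (c + a) ≤ t) : φ x + a ≤ t := by
  have := apply_le_add_of_forall_le (t := t - (c + a)) hb fun j => by linarith [hx j]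
  linarith

end MaxBound

namespace SLoc

variable {ϑ : ℝ}

theorem mono {m : ℕ} {φ : (Fin m → ℝ) → ℝ} {ϑ' : ℝ} (h : SLoc φ ϑ) (hϑ : ϑ ≤ ϑ') :
    SLoc φ ϑ' :=
  fun k x hx => h k x fun j hj => by linarith [hx j hj]

theorem apply_comp_eq {m n : ℕ} {φ : (Fin m → ℝ) → ℝ} {e : Fin m → Fin n} (h : SLoc φ ϑ)
    (he : e.Injective) {x : Fin n → ℝ} {i : Fin m}
    (hx : ∀ j, j ≠ e i → x j + ϑ ≤ x (e i)) : φ (fun j => x (e j)) = x (e i) :=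
  h i _ fun j hj => hx (e j) (he.ne hj)

variable {φ : (Fin 2 → ℝ) → ℝ} {a b : ℝ}

theorem apply_pair_of_left (h : SLoc φ ϑ) (hab : b + ϑ ≤ a) : φ ![a, b] = a :=
  h 0 _ (by simpa [Fin.forall_fin_two] using hab)

theorem apply_pair_of_right (h : SLoc φ ϑ) (hab : a + ϑ ≤ b) : φ ![a, b] = b :=
  h 1 _ (by simpa [Fin.forall_fin_two] using hab)

end SLoc

theorem sloc_composition_general (n₂ n₃ : ℕ) (hn₂ : 0 < n₂) (hn₃ : 0 < n₃)
    (φ₁ : (Fin 2 → ℝ) → ℝ) (φ₂ : (Fin n₂ → ℝ) → ℝ) (φ₃ : (Fin n₃ → ℝ) → ℝ)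
    (ϑ₁ ϑ₂ ϑ₃ c₁ c₂ c₃ : ℝ)
    (hs₁ : SLoc φ₁ ϑ₁) (hs₂ : SLoc φ₂ ϑ₂) (hs₃ : SLoc φ₃ ϑ₃)
    (hb₁ : ∀ x : Fin 2 → ℝ, φ₁ x ≤ (⨆ k, x k) + c₁)
    (hb₂ : ∀ x : Fin n₂ → ℝ, φ₂ x ≤ (⨆ k, x k) + c₂)
    (hb₃ : ∀ x : Fin n₃ → ℝ, φ₃ x ≤ (⨆ k, x k) + c₃)
    (φ : (Fin (n₂ + n₃) → ℝ) → ℝ)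
    (hφ : ∀ x : Fin (n₂ + n₃) → ℝ,
      φ x = φ₁ ![φ₂ (fun i => x (Fin.castAdd n₃ i)), φ₃ (fun i => x (Fin.natAdd n₂ i))]) :
    SLoc φ (max (max ϑ₂ ϑ₃) (max (c₂ + ϑ₁) (c₃ + ϑ₁))) ∧
    ∀ x : Fin (n₂ + n₃) → ℝ, φ x ≤ (⨆ k, x k) + c₁ + max c₂ c₃ := by
  have : Nonempty (Fin n₂) := Fin.pos_iff_nonempty.mp hn₂
  have : Nonempty (Fin n₃) := Fin.pos_iff_nonempty.mp hn₃
  refine ⟨fun k x hx => ?_, fun x => ?_⟩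
  · rw [hφ]
    induction k using Fin.addCases with
    | left i =>
      have h₂ := (hs₂.mono (by simp)).apply_comp_eq (Fin.castAdd_injective n₂ n₃) hx
      have h₃ : φ₃ (fun j => x (Fin.natAdd n₂ j)) + ϑ₁ ≤ x (Fin.castAdd n₃ i) :=
        apply_add_le_of_forall_add_le (hb₃ _) fun j =>
          (add_le_add_right (by simp) _).trans (hx _ (Fin.castAdd_ne_natAdd i j).symm)
      rw [h₂]
      exact hs₁.apply_pair_of_left h₃
    | right i =>
      have h₃ := (hs₃.mono (by simp)).apply_comp_eq (Fin.natAdd_injective n₃ n₂) hx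
      have h₂ : φ₂ (fun j => x (Fin.castAdd n₃ j)) + ϑ₁ ≤ x (Fin.natAdd n₂ i) :=
        apply_add_le_of_forall_add_le (hb₂ _) fun j =>
          (add_le_add_right (by simp) _).trans (hx _ (Fin.castAdd_ne_natAdd j i))
      rw [h₃]
      exact hs₁.apply_pair_of_right h₂
  · have hx (k) : x k ≤ ⨆ k, x k := le_ciSup (Finite.bddAbove_range x) k
    have h₂ : φ₂ (fun j => x (Fin.castAdd n₃ j)) ≤ (⨆ k, x k) + max c₂ c₃ :=
      (apply_le_add_of_forall_le (hb₂ _) fun j => hx _).trans (by gcongr; exact le_max_left _ _)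
    have h₃ : φ₃ (fun j => x (Fin.natAdd n₂ j)) ≤ (⨆ k, x k) + max c₂ c₃ :=
      (apply_le_add_of_forall_le (hb₃ _) fun j => hx _).trans (by gcongr; exact le_max_right _ _)
    rw [hφ, add_right_comm]
    exact apply_le_add_of_forall_le (hb₁ _) (Fin.forall_fin_two.2 ⟨h₂, h₃⟩)

/-- composition of functions satisfying `(S_loc)` and a max-coordinate
upper bound again satisfies `(S_loc)`, with constant
`max(ϑ₂, ϑ₃, c₂+ϑ₁, c₃+ϑ₁)`, and the composite is bounded by
`max_k x_k + c₁ + max(c₂,c₃)`. -/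
theorem sloc_composition (n₂ n₃ : ℕ) (hn₂ : 0 < n₂) (hn₃ : 0 < n₃)
    (φ₁ : (Fin 2 → ℝ) → ℝ) (φ₂ : (Fin n₂ → ℝ) → ℝ) (φ₃ : (Fin n₃ → ℝ) → ℝ)
    (ϑ₁ ϑ₂ ϑ₃ c₁ c₂ c₃ : ℝ)
    (hϑ₁ : 0 ≤ ϑ₁) (hϑ₂ : 0 ≤ ϑ₂) (hϑ₃ : 0 ≤ ϑ₃)
    (hc₁ : 0 ≤ c₁) (hc₂ : 0 ≤ c₂) (hc₃ : 0 ≤ c₃)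
    (hs₁ : SLoc φ₁ ϑ₁) (hs₂ : SLoc φ₂ ϑ₂) (hs₃ : SLoc φ₃ ϑ₃)
    (hb₁ : ∀ x : Fin 2 → ℝ, φ₁ x ≤ (⨆ k, x k) + c₁)
    (hb₂ : ∀ x : Fin n₂ → ℝ, φ₂ x ≤ (⨆ k, x k) + c₂)
    (hb₃ : ∀ x : Fin n₃ → ℝ, φ₃ x ≤ (⨆ k, x k) + c₃)
    (φ : (Fin (n₂ + n₃) → ℝ) → ℝ)
    (hφ : ∀ x : Fin (n₂ + n₃) → ℝ,
      φ x = φ₁ ![φ₂ (fun i => x (Fin.castAdd n₃ i)), φ₃ (fun i => x (Fin.natAdd n₂ i))]) :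
    SLoc φ (max (max ϑ₂ ϑ₃) (max (c₂ + ϑ₁) (c₃ + ϑ₁))) ∧
    ∀ x : Fin (n₂ + n₃) → ℝ, φ x ≤ (⨆ k, x k) + c₁ + max c₂ c₃ :=
  sloc_composition_general n₂ n₃ hn₂ hn₃ φ₁ φ₂ φ₃ ϑ₁ ϑ₂ ϑ₃ c₁ c₂ c₃ hs₁ hs₂ hs₃ hb₁ hb₂ hb₃ φ hφ
end

section
/- Under (H.ρ), let U_k = {x ∈ ℝ^K : x_k > x_j for all j ≠ k}, U = ∪_{k=1}^K U_k, and let v : U → ℝ^K be defined by v(x) = e_k for x ∈ U_k. Then for every compact set C ⊂ U, the gradients ∇H_ε = ∇H(ε⁻¹ ·) converge uniformly on C to v as ε → 0⁺, i.e. sup_{x ∈ C} ‖∇H(ε⁻¹ x) − v(x)‖ → 0 as ε → 0⁺. -/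
/-! Convexity gives `⟪∇H y, z - y⟫ ≤ H z - H y`, and `H` is within `c₀` of the largest
coordinate. If `y_k` exceeds every other coordinate of `y` by a margin `s`, then `k` stays the
largest coordinate on the ball of radius `s / 2` around `y`, so testing the convexity inequality
against `z = y + (s / 2) • u` for unit vectors `u` gives `‖∇H y - e_k‖ ≤ 2 c₀ / s`. A compact
`C ⊆ U` has a uniform margin `m > 0`, and the point `ε⁻¹ • x` has margin `m / ε`. -/

open InnerProductSpace Filter Topology

theorem ConvexOn.le_sub_of_hasFDerivAt {E : Type*} [NormedAddCommGroup E] [NormedSpace ℝ E]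
    {S : Set E} {f : E → ℝ} {f' : E →L[ℝ] ℝ} {y z : E} (hf : ConvexOn ℝ S f) (hy : y ∈ S)
    (hz : z ∈ S) (hf' : HasFDerivAt f f' y) : f' (z - y) ≤ f z - f y := by
  have hline : HasDerivAt (f ∘ AffineMap.lineMap (k := ℝ) y z) (f' (z - y)) 0 :=
    hf'.comp_hasDerivAt_of_eq 0 AffineMap.hasDerivAt_lineMap (by simp)
  have hslope := (hf.comp_affineMap (AffineMap.lineMap y z)).le_slope_of_hasDerivAt
    (by simpa using hy) (by simpa using hz) one_pos hline
  simpa [slope_def_field] using hslope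

theorem norm_le_of_forall_inner_le {E : Type*} [NormedAddCommGroup E] [InnerProductSpace ℝ E]
    {w : E} {b : ℝ} (hb : ∀ u : E, ‖u‖ ≤ 1 → ⟪w, u⟫_ℝ ≤ b) : ‖w‖ ≤ b := by
  rcases eq_or_ne w 0 with rfl | hw
  · simpa using hb 0 (by simp)
  · have hwpos : 0 < ‖w‖ := norm_pos_iff.mpr hw
    have hunit : ‖‖w‖⁻¹ • w‖ ≤ 1 := by
      rw [norm_smul, norm_inv, norm_norm, inv_mul_cancel₀ hwpos.ne']
    calc ‖w‖ = ⟪w, ‖w‖⁻¹ • w⟫_ℝ := by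
          rw [real_inner_smul_right, real_inner_self_eq_norm_mul_norm]; field_simp
      _ ≤ b := hb _ hunit

theorem IsCompact.exists_pos_forall_add_lt {ι : Type*} [Fintype ι] {C : Set (EuclideanSpace ℝ ι)}
    (hC : IsCompact C) (hCU : C ⊆ {x | ∃ k, ∀ j, j ≠ k → x j < x k}) :
    ∃ m > (0 : ℝ), ∀ x ∈ C, ∀ k, (∀ j, j ≠ k → x j < x k) → ∀ j, j ≠ k → x j + m < x k := by
  have hnear : ∀ᶠ m in 𝓝 (0 : ℝ), ∀ x ∈ C, ∀ k, (∀ j, j ≠ k → x j < x k) →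
      ∀ j, j ≠ k → x j + m < x k := by
    refine hC.eventually_forall_of_forall_eventually fun x hx => ?_
    obtain ⟨k₀, hk₀⟩ := hCU hx
    -- Near `x`, the coordinate `k₀` stays ahead, so `k₀` is the only candidate for `k`.
    have hgap : ∀ j, ∀ᶠ p : ℝ × EuclideanSpace ℝ ι in 𝓝 (0, x), j ≠ k₀ → p.2 j + |p.1| < p.2 k₀ :=
      fun j => by
        by_cases hj : j = k₀
        · exact .of_forall fun _ h => absurd hj h
        · refine (ContinuousAt.eventually_lt (by fun_prop) (by fun_prop) ?_).mono fun _ h _ => h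
          simpa using hk₀ j hj
    filter_upwards [eventually_all.2 hgap] with p hp k hk j hjk
    by_cases hkk₀ : k = k₀
    · subst hkk₀
      linarith [hp j hjk, le_abs_self p.1]
    · linarith [hk k₀ (Ne.symm hkk₀), hp k hkk₀, abs_nonneg p.1]
  obtain ⟨m, hm, hmpos⟩ := ((hnear.filter_mono nhdsWithin_le_nhds).and
    (self_mem_nhdsWithin : Set.Ioi (0 : ℝ) ∈ 𝓝[>] 0)).exists
  exact ⟨m, hmpos, hm⟩

theorem norm_gradient_sub_single_le {ι : Type*} [Fintype ι] [DecidableEq ι]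
    {H : EuclideanSpace ℝ ι → ℝ} {c₀ s : ℝ} {y : EuclideanSpace ℝ ι} {k : ι}
    (hconv : ConvexOn ℝ Set.univ H) (hd : DifferentiableAt ℝ H y)
    (hH : ∀ x : EuclideanSpace ℝ ι, H x - c₀ ≤ (⨆ k, x k) ∧ (⨆ k, x k) ≤ H x)
    (hs : 0 < s) (hgap : ∀ j, j ≠ k → y j + s ≤ y k) :
    ‖gradient H y - EuclideanSpace.single k 1‖ ≤ 2 * c₀ / s := by
  have : Nonempty ι := ⟨k⟩
  refine norm_le_of_forall_inner_le fun u hu => ?_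
  have hcoord : ∀ i, |u i| ≤ 1 := fun i => (PiLp.norm_apply_le u i).trans hu
  set t := s / 2 with ht
  set z := y + t • u
  have hz : ∀ j, z j = y j + t * u j := fun j => by simp [z]
  have hmax_z : (⨆ j, z j) ≤ z k := ciSup_le fun j => by
    rcases eq_or_ne j k with rfl | hjk
    · exact le_rfl
    · rw [hz, hz]
      have hy_gap := hgap j hjk
      have hj := abs_le.mp (hcoord j)
      have hk := abs_le.mp (hcoord k)
      nlinarith [mul_le_mul_of_nonneg_left hj.2 (by positivity : 0 ≤ t),
        mul_le_mul_of_nonneg_left hk.1 (by positivity : 0 ≤ t)]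
  have hmax_y : y k ≤ ⨆ j, y j := le_ciSup (Finite.bddAbove_range _) k
  have hstep : t * ⟪gradient H y, u⟫_ℝ ≤ t * u k + c₀ := by
    have hsub := hconv.le_sub_of_hasFDerivAt trivial trivial hd.hasGradientAt.hasFDerivAt (z := z)
    rw [toDual_apply_apply, show z - y = t • u by simp [z], real_inner_smul_right] at hsub
    linarith [(hH z).1, (hH y).2, hz k]
  rw [inner_sub_left, EuclideanSpace.inner_single_left, map_one, one_mul,
    show 2 * c₀ / s = c₀ / t by simp only [t]; field_simp, le_div_iff₀ (by positivity)]
  linarith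

theorem gradient_uniform_convergence_on_compacts_general (K : ℕ)
    (H : EuclideanSpace ℝ (Fin K) → ℝ) (c₀ : ℝ) (hc₀ : 0 < c₀)
    (hconv : ConvexOn ℝ Set.univ H) (hsmooth : ContDiff ℝ 2 H)
    (hH : ∀ x : EuclideanSpace ℝ (Fin K),
      H x - c₀ ≤ (⨆ k, x k) ∧ (⨆ k, x k) ≤ H x)
    (C : Set (EuclideanSpace ℝ (Fin K))) (hCcpt : IsCompact C)
    (hCU : C ⊆ {x | ∃ k, ∀ j, j ≠ k → x j < x k}) :
    ∀ δ > (0:ℝ), ∃ ε₀ > (0:ℝ), ∀ ε : ℝ, 0 < ε → ε ≤ ε₀ →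
      ∀ x ∈ C, ∀ k, (∀ j, j ≠ k → x j < x k) →
        ‖gradient H (ε⁻¹ • x) - EuclideanSpace.single k 1‖ < δ := by
  intro δ hδ
  obtain ⟨m, hm, hgap⟩ := hCcpt.exists_pos_forall_add_lt hCU
  have hd : Differentiable ℝ H := hsmooth.differentiable two_ne_zero
  refine ⟨δ * m / (4 * c₀), by positivity, fun ε hε hεε₀ x hx k hk => ?_⟩
  have hscaled : ∀ j, j ≠ k → (ε⁻¹ • x) j + ε⁻¹ * m ≤ (ε⁻¹ • x) k := fun j hj => by
    simp only [PiLp.smul_apply, smul_eq_mul, ← mul_add]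
    gcongr
    exact (hgap x hx k hk j hj).le
  calc _ ≤ 2 * c₀ / (ε⁻¹ * m) := norm_gradient_sub_single_le hconv (hd _) hH (by positivity) hscaled
    _ = 2 * c₀ * ε / m := by field_simp
    _ ≤ 2 * c₀ * (δ * m / (4 * c₀)) / m := by gcongr
    _ = δ / 2 := by field_simp; ring
    _ < δ := half_lt_self hδ

/-- Under (H.ρ), on every compact subset `C` of
`U = ∪_k U_k`, `U_k = {x : x_k > x_j ∀ j ≠ k}`, the gradients `∇H_ε = ∇H(ε⁻¹ ·)`
converge uniformly to the map `v` with `v(x) = e_k` on `U_k`, as `ε → 0⁺`. -/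
theorem gradient_uniform_convergence_on_compacts (K : ℕ) (hK : 0 < K)
    (H : EuclideanSpace ℝ (Fin K) → ℝ) (c₀ : ℝ) (hc₀ : 0 < c₀)
    (hconv : ConvexOn ℝ Set.univ H) (hsmooth : ContDiff ℝ 2 H)
    (hH : ∀ x : EuclideanSpace ℝ (Fin K),
      H x - c₀ ≤ (⨆ k, x k) ∧ (⨆ k, x k) ≤ H x)
    (C : Set (EuclideanSpace ℝ (Fin K))) (hCcpt : IsCompact C)
    (hCU : C ⊆ {x | ∃ k, ∀ j, j ≠ k → x j < x k}) :
    ∀ δ > (0:ℝ), ∃ ε₀ > (0:ℝ), ∀ ε : ℝ, 0 < ε → ε ≤ ε₀ →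
      ∀ x ∈ C, ∀ k, (∀ j, j ≠ k → x j < x k) →
        ‖gradient H (ε⁻¹ • x) - EuclideanSpace.single k 1‖ < δ :=
  gradient_uniform_convergence_on_compacts_general K H c₀ hc₀ hconv hsmooth hH C hCcpt hCU
end

section
/- Let O ⊂ ℝⁿ be a nonempty bounded connected open set, ν > 0, and for each k ∈ {1,…,K} let a_k : O → symmetric n×n matrices with bounded entries and a_k(x) ≥ (ν/2) Iₙ for all x ∈ O, b_k : O → ℝⁿ bounded, c_k : O → [0,∞) bounded, and f_k : O → ℝ. Define (L_k u)(x) = Σ_{i,j} a_k^{ij}(x) ∂_{ij}u(x) + Σ_i b_k^i(x) ∂_i u(x) − c_k(x) u(x). If u₁ and u₂ are both continuous on the closure of O, twice continuously differentiable in O, satisfy max_{1≤k≤K} ((L_k u)(x) + f_k(x)) = 0 for all x ∈ O, and u₁ = u₂ on the boundary ∂O, then u₁ = u₂ on the closure of O. In particular, the Dirichlet problem for the HJB equation max_k (L_k u + f_k) = 0 in O with u = g on ∂O has at most one solution in C(cl O) ∩ C²(O). -/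
open scoped BigOperators
open Matrix

/-- First partial derivative `∂_i u(x)` in the `i`-th coordinate direction. -/
noncomputable def pd1 (n : ℕ) (u : EuclideanSpace ℝ (Fin n) → ℝ)
    (x : EuclideanSpace ℝ (Fin n)) (i : Fin n) : ℝ :=
  fderiv ℝ u x (EuclideanSpace.single i 1)

/-- Second partial derivative `∂_{ij} u(x)`. -/
noncomputable def pd2 (n : ℕ) (u : EuclideanSpace ℝ (Fin n) → ℝ)
    (x : EuclideanSpace ℝ (Fin n)) (i j : Fin n) : ℝ :=
  fderiv ℝ (fun y => fderiv ℝ u y (EuclideanSpace.single j 1)) x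
    (EuclideanSpace.single i 1)

/-- `(L u)(x) = Σ_{ij} a^{ij} ∂_{ij}u(x) + Σ_i b^i ∂_i u(x) − c u(x)`. -/
noncomputable def Lop (n : ℕ) (a : Matrix (Fin n) (Fin n) ℝ) (bv : Fin n → ℝ) (c : ℝ)
    (u : EuclideanSpace ℝ (Fin n) → ℝ) (x : EuclideanSpace ℝ (Fin n)) : ℝ :=
  (∑ i, ∑ j, a i j * pd2 n u x i j) + (∑ i, bv i * pd1 n u x i) - c * u x

/-!
At an interior maximum of a `C²` function the gradient vanishes and the Hessian is negative
semidefinite, so `L v ≤ 0` there when `a ≥ 0`, `c ≥ 0` and the maximum is nonnegative; hence a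
function with `max_k L_k v > 0` in `O` cannot have a positive interior maximum. Since
`a_k^{11} ≥ ν/2` and `b_k`, `c_k` are bounded, `φ = exp (γ x₁)` has `L_k φ > 0` for `γ` large.
If `u₁`, `u₂` solve the HJB equation, the index realising the maximum for `u₁` at `x` gives
`L_k (u₁ - u₂) x ≥ 0`, so `u₁ - u₂ + t (φ - E)`, with `E ≥ φ` on `cl O`, obeys the strict
principle for every `t > 0`; letting `t → 0` gives `u₁ ≤ u₂`, and by symmetry `u₁ = u₂`.
-/

open Filter Topology

section SecondDerivative

variable {E : Type*} [NormedAddCommGroup E] [NormedSpace ℝ E]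

theorem IsLocalMax.deriv_deriv_nonpos {g : ℝ → ℝ} {t : ℝ} (hmax : IsLocalMax g t)
    (hg : ContinuousAt g t) : deriv (deriv g) t ≤ 0 := by
  by_contra! hpos
  have hmin := isLocalMin_of_deriv_deriv_pos hpos hmax.deriv_eq_zero hg
  have hconst : g =ᶠ[𝓝 t] fun _ => g t :=
    (hmax.and hmin).mono fun s hs => le_antisymm hs.1 hs.2
  have hderiv : deriv g =ᶠ[𝓝 t] fun _ => 0 := by simpa using hconst.deriv
  simp [hderiv.deriv_eq] at hpos

theorem ContDiffAt.eventually_differentiableAt {F : Type*} [NormedAddCommGroup F]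
    [NormedSpace ℝ F] {f : E → F} {x : E} (hf : ContDiffAt ℝ 2 f x) :
    ∀ᶠ y in 𝓝 x, DifferentiableAt ℝ f y :=
  (hf.eventually (by simp)).mono fun _ hy => hy.differentiableAt (by norm_num)

theorem ContDiffAt.differentiableAt_fderiv {F : Type*} [NormedAddCommGroup F] [NormedSpace ℝ F]
    {f : E → F} {x : E} (hf : ContDiffAt ℝ 2 f x) :
    DifferentiableAt ℝ (fderiv ℝ f) x :=
  (hf.fderiv_right (m := 1) le_rfl).differentiableAt (by norm_num)

theorem IsLocalMax.fderiv_fderiv_apply_self_nonpos {v : E → ℝ} {x : E} (hmax : IsLocalMax v x)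
    (hv : ContDiffAt ℝ 2 v x) (h : E) : fderiv ℝ (fderiv ℝ v) x h h ≤ 0 := by
  set line : ℝ → E := fun t => x + t • h
  have hline : ∀ t, HasDerivAt line h t := fun t => by
    simpa only [one_smul] using ((hasDerivAt_id t).smul_const h).const_add x (f := fun t => t • h)
  have hline0 : line 0 = x := by simp [line]
  have hcont : ContinuousAt line 0 := (hline 0).continuousAt
  have hderiv : deriv (v ∘ line) =ᶠ[𝓝 0] fun t => fderiv ℝ v (line t) h := by
    filter_upwards [hcont.tendsto.eventually (hline0 ▸ hv.eventually_differentiableAt)]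
      with t ht
    exact (ht.hasFDerivAt.comp_hasDerivAt t (hline t)).deriv
  have hderiv2 : HasDerivAt (fun t => fderiv ℝ v (line t) h) (fderiv ℝ (fderiv ℝ v) x h h) 0 := by
    have hF := (hline0 ▸ hv.differentiableAt_fderiv).hasFDerivAt.comp_hasDerivAt 0 (hline 0)
    simpa [hline0] using hF.clm_apply (hasDerivAt_const 0 h)
  rw [← hderiv2.deriv, ← hderiv.deriv_eq]
  exact (hline0 ▸ hmax).comp_continuous hcont |>.deriv_deriv_nonpos
    (hv.continuousAt.comp_of_eq hcont hline0)

end SecondDerivative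

theorem Matrix.PosSemidef.sum_mul_nonpos {ι : Type*} [Fintype ι] {A H : Matrix ι ι ℝ}
    (hA : A.PosSemidef) (hH : ∀ ξ : ι → ℝ, ∑ i, ∑ j, ξ i * ξ j * H i j ≤ 0) :
    ∑ i, ∑ j, A i j * H i j ≤ 0 := by
  obtain ⟨m, v, rfl⟩ := posSemidef_iff_eq_sum_vecMulVec.mp hA
  calc ∑ i, ∑ j, (∑ k, vecMulVec (v k) (star (v k))) i j * H i j
      = ∑ k, ∑ i, ∑ j, v k i * v k j * H i j := by
        simp only [Matrix.sum_apply, vecMulVec_apply, star_trivial, Finset.sum_mul]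
        rw [Finset.sum_comm (s := Finset.univ (α := Fin m))]
        exact Finset.sum_congr rfl fun i _ => Finset.sum_comm
    _ ≤ 0 := Finset.sum_nonpos fun k _ => hH (v k)

theorem Matrix.PosSemidef.of_sub_smul_one {ι : Type*} [Fintype ι] [DecidableEq ι]
    {A : Matrix ι ι ℝ} {s : ℝ} (hA : (A - s • 1).PosSemidef) (hs : 0 ≤ s) : A.PosSemidef := by
  simpa using hA.add (PosSemidef.one.smul hs)

theorem Matrix.PosSemidef.le_diag_of_sub_smul_one {ι : Type*} [Fintype ι] [DecidableEq ι]
    {A : Matrix ι ι ℝ} {s : ℝ} (hA : (A - s • 1).PosSemidef) (i : ι) : s ≤ A i i := by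
  simpa using hA.diag_nonneg (i := i)

section PartialDerivatives

variable {n : ℕ} {u f g : EuclideanSpace ℝ (Fin n) → ℝ} {x : EuclideanSpace ℝ (Fin n)}

theorem pd2_eq_fderiv_fderiv (hu : DifferentiableAt ℝ (fderiv ℝ u) x) (i j : Fin n) :
    pd2 n u x i j =
      fderiv ℝ (fderiv ℝ u) x (EuclideanSpace.single i 1) (EuclideanSpace.single j 1) := by
  rw [pd2, fderiv_clm_apply hu (differentiableAt_const _)]
  simp

theorem IsLocalMax.sum_mul_pd2_nonpos (hmax : IsLocalMax u x) (hu : ContDiffAt ℝ 2 u x)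
    (ξ : Fin n → ℝ) : ∑ i, ∑ j, ξ i * ξ j * pd2 n u x i j ≤ 0 := by
  have key := hmax.fderiv_fderiv_apply_self_nonpos hu (∑ i, ξ i • EuclideanSpace.single i 1)
  simp only [map_sum, map_smul, _root_.sum_apply, _root_.smul_apply,
    smul_eq_mul, Finset.mul_sum, ← pd2_eq_fderiv_fderiv hu.differentiableAt_fderiv] at key
  rw [Finset.sum_comm] at key
  simpa only [mul_left_comm, mul_assoc] using key

theorem IsLocalMax.Lop_nonpos {A : Matrix (Fin n) (Fin n) ℝ} {bv : Fin n → ℝ} {c : ℝ}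
    (hmax : IsLocalMax u x) (hu : ContDiffAt ℝ 2 u x) (hA : A.PosSemidef) (hc : 0 ≤ c)
    (hux : 0 ≤ u x) : Lop n A bv c u x ≤ 0 := by
  have hgrad : ∀ i, pd1 n u x i = 0 := fun i => by simp [pd1, hmax.fderiv_eq_zero]
  have hhess := hA.sum_mul_nonpos (hmax.sum_mul_pd2_nonpos hu)
  simp only [Lop, hgrad, mul_zero, Finset.sum_const_zero, add_zero]
  nlinarith [mul_nonneg hc hux]

theorem pd1_add_mul_add_const (hf : DifferentiableAt ℝ f x) (hg : DifferentiableAt ℝ g x)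
    (β δ : ℝ) (i : Fin n) :
    pd1 n (fun y => f y + β * g y + δ) x i = pd1 n f x i + β * pd1 n g x i := by
  rw [pd1, ((hf.hasFDerivAt.fun_add (hg.hasFDerivAt.const_mul β)).add_const δ).fderiv]
  rfl

theorem pd2_add_mul_add_const (hf : ContDiffAt ℝ 2 f x) (hg : ContDiffAt ℝ 2 g x)
    (β δ : ℝ) (i j : Fin n) :
    pd2 n (fun y => f y + β * g y + δ) x i j = pd2 n f x i j + β * pd2 n g x i j := by
  set e : EuclideanSpace ℝ (Fin n) := EuclideanSpace.single j 1
  have hfirst : (fun y => fderiv ℝ (fun y => f y + β * g y + δ) y e)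
      =ᶠ[𝓝 x] fun y => fderiv ℝ f y e + β * fderiv ℝ g y e := by
    filter_upwards [hf.eventually_differentiableAt, hg.eventually_differentiableAt]
      with y hfy hgy
    exact pd1_add_mul_add_const hfy hgy β δ j
  have hf' : DifferentiableAt ℝ (fun y => fderiv ℝ f y e) x :=
    hf.differentiableAt_fderiv.clm_apply (differentiableAt_const e)
  have hg' : DifferentiableAt ℝ (fun y => fderiv ℝ g y e) x :=
    hg.differentiableAt_fderiv.clm_apply (differentiableAt_const e)
  rw [pd2, hfirst.fderiv_eq, (hf'.hasFDerivAt.fun_add (hg'.hasFDerivAt.const_mul β)).fderiv]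
  rfl

theorem Lop_add_mul_add_const (A : Matrix (Fin n) (Fin n) ℝ) (bv : Fin n → ℝ) (c : ℝ)
    (hf : ContDiffAt ℝ 2 f x) (hg : ContDiffAt ℝ 2 g x) (β δ : ℝ) :
    Lop n A bv c (fun y => f y + β * g y + δ) x =
      Lop n A bv c f x + β * Lop n A bv c g x - c * δ := by
  simp only [Lop, pd2_add_mul_add_const hf hg,
    pd1_add_mul_add_const (hf.differentiableAt two_ne_zero) (hg.differentiableAt two_ne_zero),
    mul_add, Finset.sum_add_distrib, mul_left_comm _ β]
  simp only [← Finset.mul_sum]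
  ring

theorem Lop_sub (A : Matrix (Fin n) (Fin n) ℝ) (bv : Fin n → ℝ) (c : ℝ)
    (hf : ContDiffAt ℝ 2 f x) (hg : ContDiffAt ℝ 2 g x) :
    Lop n A bv c (f - g) x = Lop n A bv c f x - Lop n A bv c g x := by
  have hfg : f - g = fun y => f y + (-1) * g y + 0 := by ext; simp; ring
  rw [hfg, Lop_add_mul_add_const A bv c hf hg]
  ring

end PartialDerivatives

section ExponentialBarrier

variable {n : ℕ} (γ : ℝ) (i₀ : Fin n) (x : EuclideanSpace ℝ (Fin n))

theorem hasFDerivAt_exp_coord :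
    HasFDerivAt (fun y : EuclideanSpace ℝ (Fin n) => Real.exp (γ * y i₀))
      (Real.exp (γ * x i₀) • γ • EuclideanSpace.proj (𝕜 := ℝ) i₀) x :=
  ((EuclideanSpace.proj i₀).hasFDerivAt.const_mul γ).exp

theorem pd1_exp_coord (i : Fin n) :
    pd1 n (fun y => Real.exp (γ * y i₀)) x i = if i₀ = i then γ * Real.exp (γ * x i₀) else 0 := by
  rw [pd1, (hasFDerivAt_exp_coord γ i₀ x).fderiv]
  split_ifs with h <;> simp [h, mul_comm]

theorem pd2_exp_coord (i j : Fin n) :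
    pd2 n (fun y => Real.exp (γ * y i₀)) x i j =
      if i₀ = i ∧ i₀ = j then γ ^ 2 * Real.exp (γ * x i₀) else 0 := by
  have hfirst : (fun y => fderiv ℝ (fun y => Real.exp (γ * y i₀)) y (EuclideanSpace.single j 1))
      = fun y => if i₀ = j then γ * Real.exp (γ * y i₀) else 0 :=
    funext fun y => pd1_exp_coord γ i₀ y j
  rw [pd2, hfirst]
  by_cases hj : i₀ = j
  · subst hj
    simp only [if_true, and_true]
    rw [fderiv_const_mul (hasFDerivAt_exp_coord γ i₀ x).differentiableAt]
    change γ * pd1 n (fun y => Real.exp (γ * y i₀)) x i = _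
    rw [pd1_exp_coord]
    split_ifs <;> ring
  · simp [hj]

theorem Lop_exp_coord (A : Matrix (Fin n) (Fin n) ℝ) (bv : Fin n → ℝ) (c : ℝ) :
    Lop n A bv c (fun y => Real.exp (γ * y i₀)) x =
      Real.exp (γ * x i₀) * (γ ^ 2 * A i₀ i₀ + γ * bv i₀ - c) := by
  simp only [Lop, pd1_exp_coord, pd2_exp_coord, mul_ite, mul_zero, ite_and]
  simp only [Finset.sum_ite_irrel, Finset.sum_ite_eq, Finset.mem_univ, if_true,
    Finset.sum_const_zero]
  ring

end ExponentialBarrier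

theorem exists_forall_sq_mul_add_mul_sub_pos {ν : ℝ} (hν : 0 < ν) (B C : ℝ) :
    ∃ γ : ℝ, ∀ α β c : ℝ, ν / 2 ≤ α → |β| ≤ B → c ≤ C → 0 < γ ^ 2 * α + γ * β - c := by
  refine ⟨2 * (|B| + |C| + 1) / ν + 1, fun α β c hα hβ hc => ?_⟩
  set γ := 2 * (|B| + |C| + 1) / ν + 1
  have hγ1 : 1 ≤ γ := le_add_of_nonneg_left (by positivity)
  have hγν : |B| + |C| + 1 ≤ γ * (ν / 2) := by
    simp only [γ]; field_simp; nlinarith [abs_nonneg B, abs_nonneg C]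
  have hβ' : -|B| ≤ β := (neg_le_neg (hβ.trans (le_abs_self B))).trans (neg_abs_le β)
  have hγ0 : 0 ≤ γ := zero_le_one.trans hγ1
  nlinarith [le_abs_self C, mul_le_mul_of_nonneg_left hα (sq_nonneg γ),
    mul_le_mul_of_nonneg_left hγν hγ0, mul_le_mul_of_nonneg_left hβ' hγ0,
    mul_nonneg (sub_nonneg.mpr hγ1) (add_nonneg (abs_nonneg C) zero_le_one)]

section MaximumPrinciple

variable {ι : Type*} {n : ℕ} {O : Set (EuclideanSpace ℝ (Fin n))}
  {a : ι → EuclideanSpace ℝ (Fin n) → Matrix (Fin n) (Fin n) ℝ}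
  {b : ι → EuclideanSpace ℝ (Fin n) → Fin n → ℝ} {c : ι → EuclideanSpace ℝ (Fin n) → ℝ}

theorem exists_contDiff_Lop_pos [Finite ι] {ν : ℝ} (hν : 0 < ν) (i₀ : Fin n)
    (ha : ∀ k, ∀ x ∈ O, ν / 2 ≤ a k x i₀ i₀) (hb : ∀ k, ∃ M, ∀ x ∈ O, |b k x i₀| ≤ M)
    (hc : ∀ k, ∃ M, ∀ x ∈ O, c k x ≤ M) :
    ∃ φ : EuclideanSpace ℝ (Fin n) → ℝ,
      ContDiff ℝ 2 φ ∧ ∀ k, ∀ x ∈ O, 0 < Lop n (a k x) (b k x) (c k x) φ x := by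
  choose Mb hMb using hb
  choose Mc hMc using hc
  obtain ⟨B, hB⟩ := Finite.exists_le Mb
  obtain ⟨C, hC⟩ := Finite.exists_le Mc
  obtain ⟨γ, hγ⟩ := exists_forall_sq_mul_add_mul_sub_pos hν B C
  refine ⟨fun y => Real.exp (γ * y i₀), by fun_prop, fun k x hx => ?_⟩
  rw [Lop_exp_coord]
  exact mul_pos (Real.exp_pos _)
    (hγ _ _ _ (ha k x hx) ((hMb k x hx).trans (hB k)) ((hMc k x hx).trans (hC k)))

theorem nonpos_of_forall_exists_Lop_pos (hO : IsOpen O) (hcpt : IsCompact (closure O))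
    (ha : ∀ k, ∀ x ∈ O, (a k x).PosSemidef) (hc : ∀ k, ∀ x ∈ O, 0 ≤ c k x)
    {v : EuclideanSpace ℝ (Fin n) → ℝ} (hv : ContinuousOn v (closure O))
    (hv₂ : ContDiffOn ℝ 2 v O) (hLv : ∀ x ∈ O, ∃ k, 0 < Lop n (a k x) (b k x) (c k x) v x)
    (hbdry : ∀ x ∈ frontier O, v x ≤ 0) {x : EuclideanSpace ℝ (Fin n)} (hx : x ∈ closure O) :
    v x ≤ 0 := by
  obtain ⟨z, hz, hzmax⟩ := hcpt.exists_isMaxOn ⟨x, hx⟩ hv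
  refine (hzmax hx).trans (not_lt.mp fun hpos => ?_)
  have hzO : z ∈ O := by_contra fun hzO => (hbdry z (hO.frontier_eq ▸ ⟨hz, hzO⟩)).not_gt hpos
  have hmax : IsLocalMax v z :=
    hzmax.isLocalMax (mem_of_superset (hO.mem_nhds hzO) subset_closure)
  obtain ⟨k, hk⟩ := hLv z hzO
  exact hk.not_ge <| hmax.Lop_nonpos (hv₂.contDiffAt (hO.mem_nhds hzO)) (ha k z hzO)
    (hc k z hzO) hpos.le

theorem nonpos_of_forall_exists_Lop_nonneg [Finite ι] {ν : ℝ} (hν : 0 < ν) (i₀ : Fin n)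
    (hO : IsOpen O) (hOb : Bornology.IsBounded O)
    (ha : ∀ k, ∀ x ∈ O, (a k x - (ν / 2) • 1).PosSemidef)
    (hb : ∀ k, ∃ M, ∀ x ∈ O, |b k x i₀| ≤ M)
    (hc : ∀ k, ∀ x ∈ O, 0 ≤ c k x) (hcb : ∀ k, ∃ M, ∀ x ∈ O, c k x ≤ M)
    {w : EuclideanSpace ℝ (Fin n) → ℝ} (hw : ContinuousOn w (closure O))
    (hw₂ : ContDiffOn ℝ 2 w O) (hLw : ∀ x ∈ O, ∃ k, 0 ≤ Lop n (a k x) (b k x) (c k x) w x)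
    (hbdry : ∀ x ∈ frontier O, w x ≤ 0) {x : EuclideanSpace ℝ (Fin n)} (hx : x ∈ closure O) :
    w x ≤ 0 := by
  have hcpt := hOb.isCompact_closure
  obtain ⟨φ, hφ₂, hLφ⟩ := exists_contDiff_Lop_pos hν i₀
    (fun k y hy => (ha k y hy).le_diag_of_sub_smul_one i₀) hb hcb
  obtain ⟨E, hE⟩ := hcpt.exists_bound_of_continuousOn hφ₂.continuous.continuousOn
  have hE₀ : 0 ≤ E := (norm_nonneg _).trans (hE x hx)
  have hφE : ∀ y ∈ closure O, φ y ≤ E := fun y hy => (le_abs_self _).trans (hE y hy)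
  have hperturbed : ∀ t : ℝ, 0 < t → w x ≤ t * (E - φ x) := by
    intro t ht
    have hv := nonpos_of_forall_exists_Lop_pos (b := b)
      (v := fun y => w y + t * φ y + -(t * E)) hO hcpt
      (fun k y hy => (ha k y hy).of_sub_smul_one (by positivity)) hc
      ((hw.add (continuousOn_const.mul hφ₂.continuous.continuousOn)).add continuousOn_const)
      ((hw₂.add (contDiffOn_const.mul hφ₂.contDiffOn)).add contDiffOn_const) ?_ ?_ hx
    · linarith
    · intro y hy
      obtain ⟨k, hk⟩ := hLw y hy
      refine ⟨k, ?_⟩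
      rw [Lop_add_mul_add_const _ _ _ (hw₂.contDiffAt (hO.mem_nhds hy)) hφ₂.contDiffAt]
      nlinarith [mul_pos ht (hLφ k y hy), mul_nonneg (hc k y hy) (mul_nonneg ht.le hE₀)]
    · intro y hy
      nlinarith [hbdry y hy, hφE y (frontier_subset_closure hy)]
  have hlim : Tendsto (fun t : ℝ => t * (E - φ x)) (𝓝[>] 0) (𝓝 0) :=
    ((continuous_mul_const (E - φ x)).tendsto' 0 0 (zero_mul _)).mono_left nhdsWithin_le_nhds
  exact ge_of_tendsto hlim (eventually_nhdsWithin_of_forall fun t ht => hperturbed t ht)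

theorem exists_sub_nonneg_of_ciSup_le [Finite ι] [Nonempty ι] {p q : ι → ℝ}
    (h : ⨆ k, q k ≤ ⨆ k, p k) : ∃ k, 0 ≤ p k - q k := by
  obtain ⟨k, hk⟩ := exists_eq_ciSup_of_finite (f := p)
  exact ⟨k, sub_nonneg.mpr ((le_ciSup (Set.finite_range q).bddAbove k).trans (h.trans hk.ge))⟩

theorem hjb_comparison [Finite ι] [Nonempty ι] {ν : ℝ} (hν : 0 < ν) (i₀ : Fin n)
    (hO : IsOpen O) (hOb : Bornology.IsBounded O)
    (ha : ∀ k, ∀ x ∈ O, (a k x - (ν / 2) • 1).PosSemidef)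
    (hb : ∀ k, ∃ M, ∀ x ∈ O, |b k x i₀| ≤ M)
    (hc : ∀ k, ∀ x ∈ O, 0 ≤ c k x) (hcb : ∀ k, ∃ M, ∀ x ∈ O, c k x ≤ M)
    (f : ι → EuclideanSpace ℝ (Fin n) → ℝ) {u₁ u₂ : EuclideanSpace ℝ (Fin n) → ℝ}
    (hu₁ : ContinuousOn u₁ (closure O)) (hu₁' : ContDiffOn ℝ 2 u₁ O)
    (hu₂ : ContinuousOn u₂ (closure O)) (hu₂' : ContDiffOn ℝ 2 u₂ O)
    (hsub : ∀ x ∈ O, 0 ≤ ⨆ k, (Lop n (a k x) (b k x) (c k x) u₁ x + f k x))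
    (hsuper : ∀ x ∈ O, ⨆ k, (Lop n (a k x) (b k x) (c k x) u₂ x + f k x) ≤ 0)
    (hbdry : ∀ x ∈ frontier O, u₁ x ≤ u₂ x) {x : EuclideanSpace ℝ (Fin n)}
    (hx : x ∈ closure O) : u₁ x ≤ u₂ x := by
  refine sub_nonpos.mp (nonpos_of_forall_exists_Lop_nonneg hν i₀ hO hOb ha hb hc hcb
    (hu₁.sub hu₂) (hu₁'.sub hu₂') (fun y hy => ?_) (fun y hy => sub_nonpos.mpr (hbdry y hy)) hx)
  obtain ⟨k, hk⟩ := exists_sub_nonneg_of_ciSup_le ((hsuper y hy).trans (hsub y hy))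
  refine ⟨k, ?_⟩
  rw [Lop_sub _ _ _ (hu₁'.contDiffAt (hO.mem_nhds hy)) (hu₂'.contDiffAt (hO.mem_nhds hy))]
  linarith

end MaximumPrinciple

theorem hjb_dirichlet_uniqueness_general (n K : ℕ) (hn : 0 < n) (hK : 0 < K)
    (ν : ℝ) (hν : 0 < ν)
    (O : Set (EuclideanSpace ℝ (Fin n))) (hOopen : IsOpen O)
    (hObdd : Bornology.IsBounded O)
    (a : Fin K → EuclideanSpace ℝ (Fin n) → Matrix (Fin n) (Fin n) ℝ)
    (b : Fin K → EuclideanSpace ℝ (Fin n) → Fin n → ℝ)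
    (c f : Fin K → EuclideanSpace ℝ (Fin n) → ℝ)
    (ha : ∀ k, ∀ x ∈ O, (a k x).IsSymm ∧
      ((a k x) - (ν / 2) • (1 : Matrix (Fin n) (Fin n) ℝ)).PosSemidef)
    (hbbdd : ∀ k i, ∃ M : ℝ, ∀ x ∈ O, |b k x i| ≤ M)
    (hcpos : ∀ k, ∀ x ∈ O, 0 ≤ c k x)
    (hcbdd : ∀ k, ∃ M : ℝ, ∀ x ∈ O, c k x ≤ M)
    (u₁ u₂ : EuclideanSpace ℝ (Fin n) → ℝ)
    (h₁cont : ContinuousOn u₁ (closure O)) (h₁smooth : ContDiffOn ℝ 2 u₁ O)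
    (h₂cont : ContinuousOn u₂ (closure O)) (h₂smooth : ContDiffOn ℝ 2 u₂ O)
    (h₁eq : ∀ x ∈ O, (⨆ k, (Lop n (a k x) (b k x) (c k x) u₁ x + f k x)) = 0)
    (h₂eq : ∀ x ∈ O, (⨆ k, (Lop n (a k x) (b k x) (c k x) u₂ x + f k x)) = 0)
    (hbdry : ∀ x ∈ frontier O, u₁ x = u₂ x) :
    ∀ x ∈ closure O, u₁ x = u₂ x := by
  have : Nonempty (Fin K) := ⟨⟨0, hK⟩⟩
  have hA : ∀ k, ∀ x ∈ O, (a k x - (ν / 2) • 1).PosSemidef := fun k x hx => (ha k x hx).2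
  have hb := fun k => hbbdd k ⟨0, hn⟩
  intro x hx
  exact le_antisymm
    (hjb_comparison hν _ hOopen hObdd hA hb hcpos hcbdd f h₁cont h₁smooth h₂cont h₂smooth
      (fun y hy => (h₁eq y hy).ge) (fun y hy => (h₂eq y hy).le) (fun y hy => (hbdry y hy).le) hx)
    (hjb_comparison hν _ hOopen hObdd hA hb hcpos hcbdd f h₂cont h₂smooth h₁cont h₁smooth
      (fun y hy => (h₂eq y hy).ge) (fun y hy => (h₁eq y hy).le) (fun y hy => (hbdry y hy).ge) hx)

/-- comparison/uniqueness for classical solutions of the HJB Dirichlet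
problem `max_k (L_k u + f_k) = 0` in `O`: two classical solutions agreeing on `∂O`
agree on `cl O`; in particular the Dirichlet problem has at most one classical
solution. -/
theorem hjb_dirichlet_uniqueness (n K : ℕ) (hn : 0 < n) (hK : 0 < K)
    (ν : ℝ) (hν : 0 < ν)
    (O : Set (EuclideanSpace ℝ (Fin n))) (hOopen : IsOpen O) (hOne : O.Nonempty)
    (hObdd : Bornology.IsBounded O) (hOconn : IsConnected O)
    (a : Fin K → EuclideanSpace ℝ (Fin n) → Matrix (Fin n) (Fin n) ℝ)
    (b : Fin K → EuclideanSpace ℝ (Fin n) → Fin n → ℝ)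
    (c f : Fin K → EuclideanSpace ℝ (Fin n) → ℝ)
    (ha : ∀ k, ∀ x ∈ O, (a k x).IsSymm ∧
      ((a k x) - (ν / 2) • (1 : Matrix (Fin n) (Fin n) ℝ)).PosSemidef)
    (habdd : ∀ k i j, ∃ M : ℝ, ∀ x ∈ O, |a k x i j| ≤ M)
    (hbbdd : ∀ k i, ∃ M : ℝ, ∀ x ∈ O, |b k x i| ≤ M)
    (hcpos : ∀ k, ∀ x ∈ O, 0 ≤ c k x)
    (hcbdd : ∀ k, ∃ M : ℝ, ∀ x ∈ O, c k x ≤ M)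
    (u₁ u₂ : EuclideanSpace ℝ (Fin n) → ℝ)
    (h₁cont : ContinuousOn u₁ (closure O)) (h₁smooth : ContDiffOn ℝ 2 u₁ O)
    (h₂cont : ContinuousOn u₂ (closure O)) (h₂smooth : ContDiffOn ℝ 2 u₂ O)
    (h₁eq : ∀ x ∈ O, (⨆ k, (Lop n (a k x) (b k x) (c k x) u₁ x + f k x)) = 0)
    (h₂eq : ∀ x ∈ O, (⨆ k, (Lop n (a k x) (b k x) (c k x) u₂ x + f k x)) = 0)
    (hbdry : ∀ x ∈ frontier O, u₁ x = u₂ x) :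
    ∀ x ∈ closure O, u₁ x = u₂ x :=
  hjb_dirichlet_uniqueness_general n K hn hK ν hν O hOopen hObdd a b c f ha hbbdd hcpos hcbdd u₁ u₂
    h₁cont h₁smooth h₂cont h₂smooth h₁eq h₂eq hbdry
end

section
/- Let H_zang : ℝ² → ℝ be defined by H_zang(x₁,x₂) = x₁ if x₂ − x₁ < −1/2; H_zang(x₁,x₂) = −(1/2)(x₁−x₂)⁴ + (3/4)(x₁−x₂)² + (x₁+x₂)/2 + 3/32 if |x₁−x₂| ≤ 1/2; and H_zang(x₁,x₂) = x₂ if x₂ − x₁ > 1/2. Then H_zang is convex and twice continuously differentiable on ℝ², it satisfies max(x₁,x₂) ≤ H_zang(x₁,x₂) ≤ max(x₁,x₂) + 3/32 for all (x₁,x₂) ∈ ℝ², and it satisfies (S_loc) with constant 1/2. -/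
/-!
With `t = x₁ - x₂` one has `H_zang(x₁, x₂) = (x₁ + x₂)/2 + g(t)`, where `g(t) = |t|/2` for
`|t| ≥ 1/2` and `g = q` on `[-1/2, 1/2]` for the quartic `q(t) = -t⁴/2 + 3t²/4 + 3/32`; since
`max(x₁, x₂) = (x₁ + x₂)/2 + |x₁ - x₂|/2`, everything reduces to the profile `g`.
The quartic is chosen so that at `t = ±1/2` its value and slope match those of `|t|/2` and
`q''(t) = 3/2 - 6t²` vanishes. Hence `g'' = max(3/2 - 6t², 0)` is continuous and nonnegative,
so `g` is `C²` and convex, and `0 ≤ q(t) - |t|/2 ≤ 3/32` on `[-1/2, 1/2]`.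
-/

open Set

noncomputable section

def piecewiseIcc (a b : ℝ) (l m r : ℝ → ℝ) (t : ℝ) : ℝ :=
  if t ≤ a then l t else if t ≤ b then m t else r t

section piecewiseIcc

variable {a b : ℝ} {l m r : ℝ → ℝ}

theorem piecewiseIcc_eqOn_Iic : EqOn (piecewiseIcc a b l m r) l (Iic a) :=
  fun _ ht => if_pos ht

theorem piecewiseIcc_eqOn_Icc (hlm : l a = m a) :
    EqOn (piecewiseIcc a b l m r) m (Icc a b) := by
  rintro t ⟨hat, htb⟩
  rcases hat.eq_or_lt with rfl | hat
  · simp [piecewiseIcc, hlm]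
  · simp [piecewiseIcc, hat.not_ge, htb]

theorem piecewiseIcc_eqOn_Ici (hab : a < b) (hmr : m b = r b) :
    EqOn (piecewiseIcc a b l m r) r (Ici b) := by
  intro t hbt
  have hat : ¬t ≤ a := (hab.trans_le hbt).not_ge
  rcases (mem_Ici.1 hbt).eq_or_lt with rfl | hbt
  · simp [piecewiseIcc, hat, hmr]
  · simp [piecewiseIcc, hat, hbt.not_ge]

theorem continuous_piecewiseIcc (hab : a ≤ b) (hl : Continuous l) (hm : Continuous m)
    (hr : Continuous r) (hlm : l a = m a) (hmr : m b = r b) :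
    Continuous (piecewiseIcc a b l m r) := by
  refine hl.if_le (hm.if_le hr continuous_id continuous_const ?_) continuous_id
    continuous_const ?_
  · rintro t rfl
    exact hmr
  · rintro t rfl
    simp [hab, hlm]

theorem HasDerivWithinAt.of_eqOn_of_isClosed {f f' p p' : ℝ → ℝ} {s : Set ℝ} (hs : IsClosed s)
    (hp : ∀ x ∈ s, HasDerivAt p (p' x) x) (hf : EqOn f p s) (hf' : EqOn f' p' s) (x : ℝ) :
    HasDerivWithinAt f (f' x) s x := by
  by_cases hx : x ∈ s
  · rw [hf' hx]
    exact (hp x hx).hasDerivWithinAt.congr hf (hf hx)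
  · exact HasFDerivWithinAt.of_notMem_closure (hs.closure_eq.symm ▸ hx)

theorem hasDerivAt_piecewiseIcc (hab : a < b) {l' m' r' : ℝ → ℝ}
    (hl : ∀ x, HasDerivAt l (l' x) x) (hm : ∀ x, HasDerivAt m (m' x) x)
    (hr : ∀ x, HasDerivAt r (r' x) x) (hlm : l a = m a) (hmr : m b = r b)
    (hlm' : l' a = m' a) (hmr' : m' b = r' b) (x : ℝ) :
    HasDerivAt (piecewiseIcc a b l m r) (piecewiseIcc a b l' m' r' x) x := by
  have hcover : Iic a ∪ Icc a b ∪ Ici b = univ := by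
    rw [Iic_union_Icc_eq_Iic hab.le, Iic_union_Ici]
  rw [← hasDerivWithinAt_univ, ← hcover]
  refine ((HasDerivWithinAt.of_eqOn_of_isClosed isClosed_Iic (fun x _ => hl x)
    piecewiseIcc_eqOn_Iic piecewiseIcc_eqOn_Iic x).union ?_).union ?_
  · exact .of_eqOn_of_isClosed isClosed_Icc (fun x _ => hm x) (piecewiseIcc_eqOn_Icc hlm)
      (piecewiseIcc_eqOn_Icc hlm') x
  · exact .of_eqOn_of_isClosed isClosed_Ici (fun x _ => hr x) (piecewiseIcc_eqOn_Ici hab hmr)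
      (piecewiseIcc_eqOn_Ici hab hmr') x

end piecewiseIcc

theorem contDiff_two_of_hasDerivAt {f f' f'' : ℝ → ℝ} (hf : ∀ x, HasDerivAt f (f' x) x)
    (hf' : ∀ x, HasDerivAt f' (f'' x) x) (hf'' : Continuous f'') : ContDiff ℝ 2 f := by
  have hd : deriv f = f' := funext fun x => (hf x).deriv
  have hd' : deriv f' = f'' := funext fun x => (hf' x).deriv
  rw [show (2 : WithTop ℕ∞) = 1 + 1 by norm_num, contDiff_succ_iff_deriv, hd,
    contDiff_one_iff_deriv, hd']
  exact ⟨fun x => (hf x).differentiableAt, by simp, fun x => (hf' x).differentiableAt, hf''⟩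

theorem convexOn_univ_of_hasDerivAt2_nonneg {f f' f'' : ℝ → ℝ}
    (hf : ∀ x, HasDerivAt f (f' x) x) (hf' : ∀ x, HasDerivAt f' (f'' x) x)
    (hf''₀ : ∀ x, 0 ≤ f'' x) : ConvexOn ℝ univ f :=
  convexOn_of_hasDerivWithinAt2_nonneg convex_univ
    (continuous_iff_continuousAt.2 fun x => (hf x).continuousAt).continuousOn
    (fun x _ => (hf x).hasDerivWithinAt) (fun x _ => (hf' x).hasDerivWithinAt) fun x _ => hf''₀ x

def zangQuartic (t : ℝ) : ℝ := -(1/2) * t^4 + (3/4) * t^2 + 3/32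

def zangProfile : ℝ → ℝ :=
  piecewiseIcc (-(1/2)) (1/2) (fun t => -t/2) zangQuartic (fun t => t/2)

def zangProfile' : ℝ → ℝ :=
  piecewiseIcc (-(1/2)) (1/2) (fun _ => -(1/2)) (fun t => -2 * t^3 + 3/2 * t) (fun _ => 1/2)

def zangProfile'' : ℝ → ℝ :=
  piecewiseIcc (-(1/2)) (1/2) (fun _ => 0) (fun t => 3/2 - 6 * t^2) (fun _ => 0)

theorem hasDerivAt_zangProfile (x : ℝ) : HasDerivAt zangProfile (zangProfile' x) x := by
  refine hasDerivAt_piecewiseIcc (by norm_num) (fun x => ?_) (fun x => ?_) (fun x => ?_)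
    (by norm_num [zangQuartic]) (by norm_num [zangQuartic]) (by norm_num) (by norm_num) x
  · simpa [neg_div] using (hasDerivAt_id' x).neg.div_const 2
  · exact ((((hasDerivAt_pow 4 x).const_mul (-(1/2) : ℝ)).add
      ((hasDerivAt_pow 2 x).const_mul (3/4 : ℝ))).add_const (3/32 : ℝ)).congr_deriv
      (by norm_num; ring)
  · simpa using (hasDerivAt_id' x).div_const 2

theorem hasDerivAt_zangProfile' (x : ℝ) : HasDerivAt zangProfile' (zangProfile'' x) x := by
  refine hasDerivAt_piecewiseIcc (by norm_num) (fun x => hasDerivAt_const x _) (fun x => ?_)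
    (fun x => hasDerivAt_const x _) (by norm_num) (by norm_num) (by norm_num) (by norm_num) x
  exact (((hasDerivAt_pow 3 x).const_mul (-2 : ℝ)).add
    ((hasDerivAt_id' x).const_mul (3/2 : ℝ))).congr_deriv (by norm_num; ring)

theorem continuous_zangProfile'' : Continuous zangProfile'' :=
  continuous_piecewiseIcc (by norm_num) continuous_const (by fun_prop) continuous_const
    (by norm_num) (by norm_num)

theorem zangProfile''_nonneg (t : ℝ) : 0 ≤ zangProfile'' t := by
  unfold zangProfile'' piecewiseIcc
  split_ifs <;> nlinarith

theorem contDiff_zangProfile : ContDiff ℝ 2 zangProfile :=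
  contDiff_two_of_hasDerivAt hasDerivAt_zangProfile hasDerivAt_zangProfile'
    continuous_zangProfile''

theorem convexOn_zangProfile : ConvexOn ℝ univ zangProfile :=
  convexOn_univ_of_hasDerivAt2_nonneg hasDerivAt_zangProfile hasDerivAt_zangProfile'
    zangProfile''_nonneg

theorem zangProfile_of_abs_le {t : ℝ} (ht : |t| ≤ 1/2) : zangProfile t = zangQuartic t :=
  piecewiseIcc_eqOn_Icc (by norm_num [zangQuartic]) (abs_le.1 ht)

theorem zangProfile_of_le_abs {t : ℝ} (ht : 1/2 ≤ |t|) : zangProfile t = |t| / 2 := by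
  rcases le_abs'.1 ht with ht | ht
  · rw [zangProfile, piecewiseIcc_eqOn_Iic ht, abs_of_neg (by linarith), neg_div]
  · rw [zangProfile, piecewiseIcc_eqOn_Ici (by norm_num) (by norm_num [zangQuartic]) ht,
      abs_of_pos (by linarith)]

theorem zangQuartic_abs (t : ℝ) : zangQuartic |t| = zangQuartic t := by
  simp only [zangQuartic, Even.pow_abs (by decide : Even 4), sq_abs]

theorem abs_half_le_zangQuartic {t : ℝ} (ht : |t| ≤ 1/2) :
    |t| / 2 ≤ zangQuartic t ∧ zangQuartic t ≤ |t| / 2 + 3/32 := by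
  rw [← zangQuartic_abs, zangQuartic]
  have hs := abs_nonneg t
  have hs' : 0 ≤ 1/2 - |t| := sub_nonneg.2 ht
  -- with `s = |t|`: `q s - s/2 = (1/2 - s)³ (s + 3/2) / 2` and
  -- `q s - s/2 - 3/32 = -(s/2) (s³ + (1 - 3s/2))`
  constructor
  · nlinarith [mul_nonneg (pow_nonneg hs' 3) (by linarith : (0:ℝ) ≤ |t| + 3/2)]
  · nlinarith [mul_nonneg hs (pow_nonneg hs 3), mul_nonneg hs hs']

theorem zangProfile_bounds (t : ℝ) :
    |t| / 2 ≤ zangProfile t ∧ zangProfile t ≤ |t| / 2 + 3/32 := by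
  rcases le_total |t| (1/2) with ht | ht
  · rw [zangProfile_of_abs_le ht]
    exact abs_half_le_zangQuartic ht
  · rw [zangProfile_of_le_abs ht]
    constructor <;> linarith

def zangSmoothing (p : ℝ × ℝ) : ℝ := (p.1 + p.2) / 2 + zangProfile (p.1 - p.2)

theorem eq_zangSmoothing (Hz : ℝ × ℝ → ℝ)
    (h1 : ∀ x₁ x₂ : ℝ, x₂ - x₁ < -(1/2) → Hz (x₁, x₂) = x₁)
    (h2 : ∀ x₁ x₂ : ℝ, |x₁ - x₂| ≤ 1/2 →
      Hz (x₁, x₂) = -(1/2) * (x₁ - x₂)^4 + (3/4) * (x₁ - x₂)^2 + (x₁ + x₂)/2 + 3/32)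
    (h3 : ∀ x₁ x₂ : ℝ, x₂ - x₁ > 1/2 → Hz (x₁, x₂) = x₂) :
    Hz = zangSmoothing := by
  ext ⟨x₁, x₂⟩
  rw [zangSmoothing]
  rcases le_or_gt |x₁ - x₂| (1/2) with h | h
  · rw [h2 x₁ x₂ h, zangProfile_of_abs_le h, zangQuartic]
    ring
  rw [zangProfile_of_le_abs h.le]
  rcases lt_abs.1 h with h | h
  · rw [h1 x₁ x₂ (by linarith), abs_of_pos (by linarith)]
    ring
  · rw [h3 x₁ x₂ (by linarith), abs_of_neg (by linarith)]
    ring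

theorem convexOn_zangSmoothing : ConvexOn ℝ univ zangSmoothing := by
  have hmean := ((2⁻¹ : ℝ) • (LinearMap.fst ℝ ℝ ℝ + LinearMap.snd ℝ ℝ ℝ)).convexOn convex_univ
  have hprofile :=
    convexOn_zangProfile.comp_linearMap (LinearMap.fst ℝ ℝ ℝ - LinearMap.snd ℝ ℝ ℝ)
  refine (hmean.add hprofile).congr fun p _ => ?_
  simp [zangSmoothing, div_eq_inv_mul, mul_add]

theorem contDiff_zangSmoothing : ContDiff ℝ 2 zangSmoothing :=
  ((contDiff_fst.add contDiff_snd).div_const 2).add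
    (contDiff_zangProfile.comp (contDiff_fst.sub contDiff_snd))

theorem max_eq_mean_add_abs_sub_half (x₁ x₂ : ℝ) :
    max x₁ x₂ = (x₁ + x₂) / 2 + |x₁ - x₂| / 2 := by
  rcases le_total x₁ x₂ with h | h
  · rw [max_eq_right h, abs_of_nonpos (sub_nonpos.2 h)]
    ring
  · rw [max_eq_left h, abs_of_nonneg (sub_nonneg.2 h)]
    ring

theorem zangSmoothing_bounds (x₁ x₂ : ℝ) :
    max x₁ x₂ ≤ zangSmoothing (x₁, x₂) ∧ zangSmoothing (x₁, x₂) ≤ max x₁ x₂ + 3/32 := by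
  obtain ⟨hlow, hup⟩ := zangProfile_bounds (x₁ - x₂)
  rw [zangSmoothing, max_eq_mean_add_abs_sub_half]
  constructor <;> linarith

theorem zangSmoothing_eq_max {x₁ x₂ : ℝ} (h : 1/2 ≤ |x₁ - x₂|) :
    zangSmoothing (x₁, x₂) = max x₁ x₂ := by
  rw [zangSmoothing, zangProfile_of_le_abs h, max_eq_mean_add_abs_sub_half]

theorem zangSmoothing_eq_left {x₁ x₂ : ℝ} (h : x₂ + 1/2 ≤ x₁) : zangSmoothing (x₁, x₂) = x₁ := by
  rw [zangSmoothing_eq_max (by rw [abs_of_nonneg (by linarith)]; linarith),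
    max_eq_left (by linarith)]

theorem zangSmoothing_eq_right {x₁ x₂ : ℝ} (h : x₁ + 1/2 ≤ x₂) :
    zangSmoothing (x₁, x₂) = x₂ := by
  rw [zangSmoothing_eq_max (by rw [abs_of_nonpos (by linarith)]; linarith),
    max_eq_right (by linarith)]

end

/-- the Zang smoothing `H_zang : ℝ² → ℝ` (given piecewise) is convex and
twice continuously differentiable, satisfies
`max(x₁,x₂) ≤ H_zang(x₁,x₂) ≤ max(x₁,x₂) + 3/32`, and satisfies `(S_loc)` with
constant `1/2`. -/
theorem zang_smoothing_properties (Hz : ℝ × ℝ → ℝ)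
    (h1 : ∀ x₁ x₂ : ℝ, x₂ - x₁ < -(1/2) → Hz (x₁, x₂) = x₁)
    (h2 : ∀ x₁ x₂ : ℝ, |x₁ - x₂| ≤ 1/2 →
      Hz (x₁, x₂) = -(1/2) * (x₁ - x₂)^4 + (3/4) * (x₁ - x₂)^2 + (x₁ + x₂)/2 + 3/32)
    (h3 : ∀ x₁ x₂ : ℝ, x₂ - x₁ > 1/2 → Hz (x₁, x₂) = x₂) :
    ConvexOn ℝ Set.univ Hz ∧
    ContDiff ℝ 2 Hz ∧
    (∀ x₁ x₂ : ℝ, max x₁ x₂ ≤ Hz (x₁, x₂) ∧ Hz (x₁, x₂) ≤ max x₁ x₂ + 3/32) ∧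
    (∀ x₁ x₂ : ℝ, (x₂ + 1/2 ≤ x₁ → Hz (x₁, x₂) = x₁) ∧
      (x₁ + 1/2 ≤ x₂ → Hz (x₁, x₂) = x₂)) := by
  obtain rfl := eq_zangSmoothing Hz h1 h2 h3
  exact ⟨convexOn_zangSmoothing, contDiff_zangSmoothing, zangSmoothing_bounds,
    fun _ _ => ⟨zangSmoothing_eq_left, zangSmoothing_eq_right⟩⟩
end
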